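/- arXiv:1606.04086 — 7 statements merged into one kernel-verified Lean document; each statement's English description precedes it below -/
import Mathlib

section
/- Suppose σ_g² = σ² > 0 for all g (homoskedasticity). Let B_1, …, B_G be independent real Gaussian random variables with B_g distributed as N(0, π_g σ²), let d_1, …, d_G be real constants, and define W_g = (e₁ᵀQ⁻¹m_g)·( B_g − π_g m_gᵀQ⁻¹ Σ_{j=1}^G m_j B_j + π_g d_g ). Then Σ_{g=1}^G ω_g > 0, and ( E[ Σ_{g=1}^G W_g² ] − σ² Σ_{g=1}^G ω_g ) / ( σ² Σ_{g=1}^G ω_g ) = ( Σ_{g=1}^G d_g² π_g ω_g ) / ( σ² Σ_{g=1}^G ω_g ) − ( Σ_{g=1}^G m_gᵀQ⁻¹m_g · π_g ω_g ) / ( Σ_{g=1}^G ω_g ). -/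
/-!
Write `c g = e₁ᵀ Q⁻¹ m g` and `s g j = m gᵀ Q⁻¹ m j`. As `Q` is symmetric, `ω g = π g c g²`, and
`W g = ∑ j, c g (δ g j - π g s g j) B j + c g π g d g` is an affine function of the independent
centred variables `B j`, so `E[W g ²] = ∑ j, (c g (δ g j - π g s g j))² π j σ² + (c g π g d g)²`.
The cross terms collapse because `∑ j, π j (s g j)² = m gᵀ Q⁻¹ Q Q⁻¹ m g = s g g`, which leaves
`E[W g ²] = σ² ω g (1 - π g s g g) + d g² π g ω g`; summing over `g` gives the identity.
For the positivity, `∑ g, ω g = e₁ᵀ Q⁻¹ e₁`, and `Q` is positive semidefinite and invertible,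
hence positive definite.
-/

open MeasureTheory ProbabilityTheory Matrix Finset

namespace Matrix

variable {n ι R : Type*} [Fintype n] [Fintype ι]

lemma IsSymm.dotProduct_mulVec_comm [CommSemiring R] {A : Matrix n n R} (hA : A.IsSymm)
    (x y : n → R) : x ⬝ᵥ (A *ᵥ y) = y ⬝ᵥ (A *ᵥ x) := by
  rw [dotProduct_mulVec, ← mulVec_transpose, hA.eq, dotProduct_comm]

lemma IsSymm.dotProduct_mul_smul_vecMulVec_mul_mulVec [CommSemiring R] {A : Matrix n n R}
    (hA : A.IsSymm) (r : R) (u x : n → R) :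
    x ⬝ᵥ ((A * (r • vecMulVec u u) * A) *ᵥ x) = r * (x ⬝ᵥ (A *ᵥ u)) ^ 2 := by
  rw [← mulVec_mulVec, ← mulVec_mulVec, smul_mulVec, vecMulVec_mulVec, mulVec_smul,
    mulVec_smul, dotProduct_smul, dotProduct_smul, hA.dotProduct_mulVec_comm u x]
  simp only [op_smul_eq_smul, smul_eq_mul]
  ring

def secondMomentMatrix [Mul R] [AddCommMonoid R] (p : ι → R) (m : ι → n → R) : Matrix n n R :=
  ∑ g, p g • vecMulVec (m g) (m g)

omit [Fintype n] in
lemma isSymm_secondMomentMatrix [CommSemiring R] (p : ι → R) (m : ι → n → R) :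
    (secondMomentMatrix p m).IsSymm := by
  simp [secondMomentMatrix, IsSymm, transpose_sum, transpose_smul, transpose_vecMulVec]

lemma dotProduct_secondMomentMatrix_mulVec [CommSemiring R] (p : ι → R) (m : ι → n → R)
    (x y : n → R) :
    x ⬝ᵥ (secondMomentMatrix p m *ᵥ y) = ∑ g, p g * ((x ⬝ᵥ m g) * (m g ⬝ᵥ y)) := by
  simp only [secondMomentMatrix, sum_mulVec, dotProduct_sum, smul_mulVec, vecMulVec_mulVec,
    op_smul_eq_smul, dotProduct_smul, smul_eq_mul]
  exact sum_congr rfl fun g _ => by ring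

variable [DecidableEq n]

lemma sum_mul_dotProduct_inv_secondMomentMatrix_mulVec_sq [CommRing R] (p : ι → R)
    (m : ι → n → R) (hQ : IsUnit (secondMomentMatrix p m).det) (i : ι) :
    ∑ j, p j * (m i ⬝ᵥ ((secondMomentMatrix p m)⁻¹ *ᵥ m j)) ^ 2
      = m i ⬝ᵥ ((secondMomentMatrix p m)⁻¹ *ᵥ m i) := by
  set Q := secondMomentMatrix p m
  have hsymm : Q⁻¹.IsSymm := (isSymm_secondMomentMatrix p m).inv
  set y := Q⁻¹ *ᵥ m i
  calc ∑ j, p j * (m i ⬝ᵥ (Q⁻¹ *ᵥ m j)) ^ 2 = ∑ j, p j * ((y ⬝ᵥ m j) * (m j ⬝ᵥ y)) := by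
        refine sum_congr rfl fun j _ => ?_
        rw [hsymm.dotProduct_mulVec_comm, dotProduct_comm y, sq]
    _ = y ⬝ᵥ (Q *ᵥ y) := (dotProduct_secondMomentMatrix_mulVec p m y y).symm
    _ = m i ⬝ᵥ y := by
        rw [mulVec_mulVec, mul_nonsing_inv _ hQ, one_mulVec, dotProduct_comm]

lemma sum_inv_secondMomentMatrix_mul_smul_vecMulVec_mul_inv [CommRing R] (p : ι → R)
    (m : ι → n → R) (hQ : IsUnit (secondMomentMatrix p m).det) :
    ∑ g, (secondMomentMatrix p m)⁻¹ * (p g • vecMulVec (m g) (m g)) * (secondMomentMatrix p m)⁻¹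
      = (secondMomentMatrix p m)⁻¹ := by
  rw [← Finset.sum_mul, ← Finset.mul_sum, ← secondMomentMatrix, nonsing_inv_mul _ hQ, one_mul]

lemma posDef_secondMomentMatrix {p : ι → ℝ} (hp : ∀ g, 0 ≤ p g) (m : ι → n → ℝ)
    (hQ : IsUnit (secondMomentMatrix p m).det) : (secondMomentMatrix p m).PosDef := by
  have hpsd : (secondMomentMatrix p m).PosSemidef := posSemidef_sum _ fun g _ => by
    simpa using (posSemidef_vecMulVec_self_star (m g)).smul (hp g)
  exact hpsd.posDef_iff_isUnit.mpr ((isUnit_iff_isUnit_det _).mpr hQ)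

end Matrix

section Algebra

variable {ι : Type*} [Fintype ι] [DecidableEq ι]

lemma sum_sq_mul_ite_sub_mul_mul (p s : ι → ℝ) (g : ι) (hs : ∑ j, p j * s j ^ 2 = s g)
    (c v : ℝ) :
    ∑ j, (c * ((if j = g then 1 else 0) - p g * s j)) ^ 2 * (p j * v)
      = v * (p g * c ^ 2) * (1 - p g * s g) := by
  have hexpand : ∑ j, p j * ((if j = g then 1 else 0) - p g * s j) ^ 2
      = p g - 2 * p g * p g * s g + p g ^ 2 * ∑ j, p j * s j ^ 2 := by
    simp [sub_sq, mul_add, mul_sub, sum_add_distrib, sum_sub_distrib, mul_pow, mul_sum,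
      mul_left_comm]
    ring
  calc ∑ j, (c * ((if j = g then 1 else 0) - p g * s j)) ^ 2 * (p j * v)
      = v * c ^ 2 * ∑ j, p j * ((if j = g then 1 else 0) - p g * s j) ^ 2 := by
        rw [mul_sum]
        exact sum_congr rfl fun _ _ => by ring
    _ = v * (p g * c ^ 2) * (1 - p g * s g) := by
        rw [hexpand, hs]
        ring

lemma mul_sub_mul_sum_add_eq_sum (x s : ι → ℝ) (g : ι) (c r e : ℝ) :
    c * (x g - r * ∑ j, x j * s j + e)
      = ∑ j, c * ((if j = g then 1 else 0) - r * s j) * x j + c * e := by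
  simp only [mul_sub, sub_mul, sum_sub_distrib, mul_ite, mul_one, mul_zero, ite_mul, zero_mul,
    sum_ite_eq', mem_univ, if_true, mul_sum, mul_add]
  congr 2
  exact sum_congr rfl fun _ _ => by ring

end Algebra

namespace ProbabilityTheory

variable {Ω : Type*} [MeasurableSpace Ω] {μ : Measure Ω}

section Gaussian

variable {X : Ω → ℝ} {a : ℝ} {v : NNReal}

lemma HasLaw.memLp_of_gaussianReal (hX : HasLaw X (gaussianReal a v) μ) {p : ENNReal}
    (hp : p ≠ ⊤) : MemLp X p μ := by
  have hid : MemLp id p (μ.map X) := hX.map_eq ▸ memLp_id_gaussianReal' p hp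
  exact (memLp_map_measure_iff aestronglyMeasurable_id hX.aemeasurable).1 hid

lemma HasLaw.integral_eq_of_gaussianReal (hX : HasLaw X (gaussianReal a v) μ) : μ[X] = a :=
  hX.integral_eq.trans integral_id_gaussianReal

lemma HasLaw.variance_eq_of_gaussianReal (hX : HasLaw X (gaussianReal a v) μ) :
    Var[X; μ] = v :=
  hX.variance_eq.trans variance_id_gaussianReal

end Gaussian

variable {ι : Type*} [Fintype ι] {B : ι → Ω → ℝ}

lemma memLp_sum_const_mul {p : ENNReal} (hB : ∀ i, MemLp (B i) p μ) (a : ι → ℝ) :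
    MemLp (fun ω => ∑ i, a i * B i ω) p μ :=
  memLp_finsetSum _ fun i _ => (hB i).const_mul (a i)

lemma integral_sq_sum_mul_add_const [IsProbabilityMeasure μ] (hB : ∀ i, MemLp (B i) 2 μ)
    (hindep : iIndepFun B μ) (a : ι → ℝ) (b : ℝ) :
    ∫ ω, (∑ i, a i * B i ω + b) ^ 2 ∂μ
      = ∑ i, a i ^ 2 * Var[B i; μ] + (∑ i, a i * μ[B i] + b) ^ 2 := by
  have hS := memLp_sum_const_mul hB a
  have hmean : μ[fun ω => ∑ i, a i * B i ω + b] = ∑ i, a i * μ[B i] + b := by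
    rw [integral_add (hS.integrable one_le_two) (integrable_const b),
      integral_finsetSum _ fun i _ => ((hB i).integrable one_le_two).const_mul (a i)]
    simp [integral_const_mul]
  have hshift : Var[fun ω => ∑ i, a i * B i ω + b; μ] = Var[fun ω => ∑ i, a i * B i ω; μ] :=
    variance_add_const hS.aestronglyMeasurable b
  have hsum : Var[fun ω => ∑ i, a i * B i ω; μ] = ∑ i, a i ^ 2 * Var[B i; μ] := by
    have h := IndepFun.variance_sum (μ := μ) (X := fun i ω => a i * B i ω) (s := univ)
      (fun i _ => (hB i).const_mul (a i)) fun i _ j _ hij =>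
        (hindep.indepFun hij).comp (measurable_const_mul (a i)) (measurable_const_mul (a j))
    simpa [Finset.sum_fn, variance_const_mul] using h
  have hdecomp : Var[fun ω => ∑ i, a i * B i ω + b; μ]
      = ∫ ω, (∑ i, a i * B i ω + b) ^ 2 ∂μ - μ[fun ω => ∑ i, a i * B i ω + b] ^ 2 :=
    variance_eq_sub (hS.add (memLp_const b))
  rw [hmean, hshift, hsum] at hdecomp
  linarith

end ProbabilityTheory

theorem crv_homoskedastic_relative_decomposition_general
    {Ω : Type*} [MeasureSpace Ω] [IsProbabilityMeasure (ℙ : Measure Ω)]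
    (k G : ℕ) (hk : 0 < k)
    (m : Fin G → Fin k → ℝ) (π d : Fin G → ℝ)
    (hπ : ∀ g, 0 < π g)
    (σ2 : ℝ) (hσ2 : 0 < σ2)
    (Q : Matrix (Fin k) (Fin k) ℝ)
    (hQ : Q = ∑ g, π g • vecMulVec (m g) (m g))
    (hQinv : IsUnit Q.det)
    (e1 : Fin k → ℝ) (he1 : e1 = Pi.single ⟨0, hk⟩ 1)
    (ω : Fin G → ℝ)
    (hω : ∀ g, ω g = e1 ⬝ᵥ ((Q⁻¹ * (π g • vecMulVec (m g) (m g)) * Q⁻¹) *ᵥ e1))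
    (B : Fin G → Ω → ℝ)
    (hBmeas : ∀ g, Measurable (B g))
    (hBindep : iIndepFun B ℙ)
    (hBlaw : ∀ g, Measure.map (B g) ℙ = gaussianReal 0 (Real.toNNReal (π g * σ2)))
    (W : Fin G → Ω → ℝ)
    (hW : ∀ g ω', W g ω' = (e1 ⬝ᵥ (Q⁻¹ *ᵥ m g)) *
      (B g ω' - π g * (m g ⬝ᵥ (Q⁻¹ *ᵥ (∑ j, B j ω' • m j))) + π g * d g)) :
    0 < ∑ g, ω g ∧
    ((∫ ω', ∑ g, (W g ω') ^ 2 ∂ℙ) - σ2 * ∑ g, ω g) / (σ2 * ∑ g, ω g)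
      = (∑ g, (d g) ^ 2 * π g * ω g) / (σ2 * ∑ g, ω g)
        - (∑ g, (m g ⬝ᵥ (Q⁻¹ *ᵥ m g)) * (π g * ω g)) / (∑ g, ω g) := by
  replace hQ : Q = secondMomentMatrix π m := hQ
  subst hQ
  set Q := secondMomentMatrix π m
  set c : Fin G → ℝ := fun g => e1 ⬝ᵥ (Q⁻¹ *ᵥ m g)
  set s : Fin G → Fin G → ℝ := fun g j => m g ⬝ᵥ (Q⁻¹ *ᵥ m j)
  have hpos : 0 < ∑ g, ω g := by
    rw [sum_congr rfl fun g _ => hω g, ← dotProduct_sum, ← sum_mulVec,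
      sum_inv_secondMomentMatrix_mul_smul_vecMulVec_mul_inv π m hQinv]
    have he1ne : e1 ≠ 0 := by simp [he1]
    simpa only [star_trivial] using
      (posDef_secondMomentMatrix (fun g => (hπ g).le) m hQinv).inv.dotProduct_mulVec_pos he1ne
  have hωc : ∀ g, ω g = π g * c g ^ 2 := fun g => by
    rw [hω, (isSymm_secondMomentMatrix π m).inv.dotProduct_mul_smul_vecMulVec_mul_mulVec]
  have hlaw : ∀ g, HasLaw (B g) (gaussianReal 0 (π g * σ2).toNNReal) ℙ :=
    fun g => ⟨(hBmeas g).aemeasurable, hBlaw g⟩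
  have hL2 : ∀ g, MemLp (B g) 2 ℙ := fun g => (hlaw g).memLp_of_gaussianReal (by simp)
  have hmean : ∀ g, ℙ[B g] = 0 := fun g => (hlaw g).integral_eq_of_gaussianReal
  have hvar : ∀ g, Var[B g; ℙ] = π g * σ2 := fun g => by
    rw [(hlaw g).variance_eq_of_gaussianReal, Real.coe_toNNReal _ (mul_pos (hπ g) hσ2).le]
  have hWlin : ∀ g, W g = fun ω' =>
      ∑ j, c g * ((if j = g then 1 else 0) - π g * s g j) * B j ω' + c g * (π g * d g) := by
    intro g
    funext ω'
    rw [hW, mulVec_sum, dotProduct_sum]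
    simp only [mulVec_smul, dotProduct_smul, smul_eq_mul]
    exact mul_sub_mul_sum_add_eq_sum (B · ω') (s g) g (c g) (π g) (π g * d g)
  have hWsq : ∀ g, ∫ ω', W g ω' ^ 2 ∂ℙ
      = σ2 * ω g - σ2 * (s g g * (π g * ω g)) + d g ^ 2 * π g * ω g := fun g => by
    rw [hWlin, integral_sq_sum_mul_add_const hL2 hBindep]
    simp only [hvar, hmean, mul_zero, sum_const_zero, zero_add]
    rw [sum_sq_mul_ite_sub_mul_mul π (s g) g
      (sum_mul_dotProduct_inv_secondMomentMatrix_mulVec_sq π m hQinv g), hωc]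
    ring
  refine ⟨hpos, ?_⟩
  rw [integral_finsetSum _ fun g _ => ?_]
  · simp only [hWsq, sum_add_distrib, sum_sub_distrib, ← mul_sum]
    field_simp
    ring
  · rw [hWlin]
    exact ((memLp_sum_const_mul hL2 _).add (memLp_const _)).integrable_sq

/-- Homoskedastic decomposition (Equation (10) of the paper) of the relative expected
difference between the large-sample limit of the cluster-robust variance estimator and
the asymptotic variance of the RD estimator. -/
theorem crv_homoskedastic_relative_decomposition
    {Ω : Type*} [MeasureSpace Ω] [IsProbabilityMeasure (ℙ : Measure Ω)]
    (k G : ℕ) (hk : 0 < k) (hG : 0 < G)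
    (m : Fin G → Fin k → ℝ) (π d : Fin G → ℝ)
    (hπ : ∀ g, 0 < π g) (hπ1 : ∑ g, π g = 1)
    (σ2 : ℝ) (hσ2 : 0 < σ2)
    (Q : Matrix (Fin k) (Fin k) ℝ)
    (hQ : Q = ∑ g, π g • vecMulVec (m g) (m g))
    (hQinv : IsUnit Q.det)
    (e1 : Fin k → ℝ) (he1 : e1 = Pi.single ⟨0, hk⟩ 1)
    (ω : Fin G → ℝ)
    (hω : ∀ g, ω g = e1 ⬝ᵥ ((Q⁻¹ * (π g • vecMulVec (m g) (m g)) * Q⁻¹) *ᵥ e1))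
    (B : Fin G → Ω → ℝ)
    (hBmeas : ∀ g, Measurable (B g))
    (hBindep : iIndepFun B ℙ)
    (hBlaw : ∀ g, Measure.map (B g) ℙ = gaussianReal 0 (Real.toNNReal (π g * σ2)))
    (W : Fin G → Ω → ℝ)
    (hW : ∀ g ω', W g ω' = (e1 ⬝ᵥ (Q⁻¹ *ᵥ m g)) *
      (B g ω' - π g * (m g ⬝ᵥ (Q⁻¹ *ᵥ (∑ j, B j ω' • m j))) + π g * d g)) :
    0 < ∑ g, ω g ∧
    ((∫ ω', ∑ g, (W g ω') ^ 2 ∂ℙ) - σ2 * ∑ g, ω g) / (σ2 * ∑ g, ω g)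
      = (∑ g, (d g) ^ 2 * π g * ω g) / (σ2 * ∑ g, ω g)
        - (∑ g, (m g ⬝ᵥ (Q⁻¹ *ᵥ m g)) * (π g * ω g)) / (∑ g, ω g) :=
  crv_homoskedastic_relative_decomposition_general k G hk m π d hπ σ2 hσ2 Q hQ hQinv e1 he1 ω hω B
    hBmeas hBindep hBlaw W hW
end

section
/- Suppose σ² > 0 and suppose the polynomial specification is correct in the sense that d_g = 0 for all g. Let B_1, …, B_G be independent real Gaussian random variables with B_g distributed as N(0, π_g σ²), and define W_g = (e₁ᵀQ⁻¹m_g)·( B_g − π_g m_gᵀQ⁻¹ Σ_{j=1}^G m_j B_j ). Then E[ Σ_{g=1}^G W_g² ] < σ² Σ_{g=1}^G ω_g; that is, under correct specification and homoskedasticity the large-sample limit of the cluster-robust variance estimator is strictly downward biased for the asymptotic variance of the regression discontinuity estimator. -/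
/-!
Write `a_g = e₁ᵀ Q⁻¹ m_g` and `s_gj = m_gᵀ Q⁻¹ m_j`. Then `W_g = a_g ∑_j (δ_gj - π_g s_gj) B_j`
is a linear combination of independent centred Gaussians, so
`E W_g² = σ² a_g² ∑_j π_j (δ_gj - π_g s_gj)²`. Since `∑_j π_j s_gj² = (Q⁻¹m_g)ᵀ Q (Q⁻¹m_g) = s_gg`,
this is `σ² π_g a_g² (1 - π_g s_gg)`, while `ω_g = π_g a_g²`. Hence the bias
`σ² ∑_g ω_g - E ∑_g W_g²` equals `σ² ∑_g π_g² a_g² s_gg`, which is positive: `Q⁻¹` is positive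
definite, and `∑_g π_g a_g m_g = Q Q⁻¹ e₁ = e₁ ≠ 0` forces some `a_g ≠ 0`.
-/

open MeasureTheory ProbabilityTheory Matrix Finset

lemma integral_sum_mul_sq_of_pairwise_indepFun {Ω ι : Type*} {mΩ : MeasurableSpace Ω}
    {μ : Measure Ω} [IsProbabilityMeasure μ] [Fintype ι] {X : ι → Ω → ℝ}
    (hX : ∀ i, MemLp (X i) 2 μ) (hmean : ∀ i, μ[X i] = 0)
    (hind : Pairwise fun i j => X i ⟂ᵢ[μ] X j) (c : ι → ℝ) :
    ∫ ω, (∑ i, c i * X i ω) ^ 2 ∂μ = ∑ i, c i ^ 2 * Var[X i; μ] := by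
  have hcX : ∀ i, MemLp (fun ω => c i * X i ω) 2 μ := fun i => (hX i).const_mul (c i)
  have hsum : Var[∑ i, fun ω => c i * X i ω; μ] = ∑ i, Var[fun ω => c i * X i ω; μ] :=
    IndepFun.variance_sum (fun i _ => hcX i) fun i _ j _ hij =>
      (hind hij).comp (measurable_const_mul (c i)) (measurable_const_mul (c j))
  have hmean_sum : μ[∑ i, fun ω => c i * X i ω] = 0 := by
    simp only [Finset.sum_apply]
    rw [integral_finsetSum _ fun i _ => (hcX i).integrable one_le_two]
    simp [integral_const_mul, hmean]
  rw [variance_of_integral_eq_zero (memLp_finsetSum' _ fun i _ => hcX i).aemeasurable hmean_sum]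
    at hsum
  simpa [Finset.sum_apply, variance_const_mul] using hsum

lemma ProbabilityTheory.HasLaw.memLp_of_gaussianReal_s2 {Ω : Type*} {mΩ : MeasurableSpace Ω}
    {P : Measure Ω} {X : Ω → ℝ} {μ : ℝ} {v : NNReal} (hX : HasLaw X (gaussianReal μ v) P)
    (p : NNReal) : MemLp X p P := by
  have := memLp_id_gaussianReal (μ := μ) (v := v) p
  rw [← hX.map_eq] at this
  exact (memLp_map_measure_iff this.1 hX.aemeasurable).1 this

lemma integral_sum_mul_sq_of_iIndepFun_gaussianReal {Ω ι : Type*} {mΩ : MeasurableSpace Ω}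
    {μ : Measure Ω} [IsProbabilityMeasure μ] [Fintype ι] {X : ι → Ω → ℝ} {v : ι → NNReal}
    (hX : ∀ i, HasLaw (X i) (gaussianReal 0 (v i)) μ) (hind : iIndepFun X μ) (c : ι → ℝ) :
    ∫ ω, (∑ i, c i * X i ω) ^ 2 ∂μ = ∑ i, c i ^ 2 * v i := by
  rw [integral_sum_mul_sq_of_pairwise_indepFun (fun i => (hX i).memLp_of_gaussianReal_s2 2)
    (fun i => by rw [(hX i).integral_eq, integral_id_gaussianReal])
    fun i j hij => hind.indepFun hij]
  simp [(hX _).variance_eq, variance_id_gaussianReal]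

lemma Matrix.IsSymm.dotProduct_mulVec_comm_s2 {n : Type*} [Fintype n] {A : Matrix n n ℝ}
    (hA : A.IsSymm) (x y : n → ℝ) : x ⬝ᵥ A *ᵥ y = y ⬝ᵥ A *ᵥ x := by
  rw [dotProduct_mulVec, ← mulVec_transpose, hA.eq, dotProduct_comm]

lemma Matrix.IsSymm.dotProduct_mul_smul_vecMulVec_mul_mulVec_s2 {n : Type*} [Fintype n]
    {A : Matrix n n ℝ} (hA : A.IsSymm) (c : ℝ) (u x : n → ℝ) :
    x ⬝ᵥ (A * (c • vecMulVec u u) * A) *ᵥ x = c * (x ⬝ᵥ A *ᵥ u) ^ 2 := by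
  rw [mul_smul_comm, smul_mul_assoc, smul_mulVec, dotProduct_smul, mul_vecMulVec, vecMulVec_mul,
    vecMulVec_mulVec, op_smul_eq_smul, dotProduct_smul, smul_eq_mul, smul_eq_mul,
    ← dotProduct_mulVec, hA.dotProduct_mulVec_comm_s2 u]
  ring

lemma sub_mul_dotProduct_mulVec_sum_smul {ι n : Type*} [Fintype ι] [DecidableEq ι] [Fintype n]
    (A : Matrix n n ℝ) (m : ι → n → ℝ) (r : ℝ) (g : ι) (y : ι → ℝ) :
    y g - r * (m g ⬝ᵥ A *ᵥ ∑ j, y j • m j) =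
      ∑ j, ((Pi.single g 1 : ι → ℝ) j - r * (m g ⬝ᵥ A *ᵥ m j)) * y j := by
  simp only [mulVec_sum, mulVec_smul, dotProduct_sum, dotProduct_smul, smul_eq_mul, mul_sum,
    Pi.single_apply, sub_mul, ite_mul, one_mul, zero_mul, sum_sub_distrib, sum_ite_eq', mem_univ,
    if_true, sub_right_inj]
  exact sum_congr rfl fun j _ => by ring

noncomputable def weightedGram {ι n : Type*} [Fintype ι] (π : ι → ℝ) (m : ι → n → ℝ) :
    Matrix n n ℝ :=
  ∑ g, π g • vecMulVec (m g) (m g)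

namespace weightedGram

variable {ι n : Type*} [Fintype ι] [Fintype n] (π : ι → ℝ) (m : ι → n → ℝ)

lemma mulVec (y : n → ℝ) :
    weightedGram π m *ᵥ y = ∑ g, (π g * (m g ⬝ᵥ y)) • m g := by
  simp only [weightedGram, sum_mulVec, smul_mulVec, vecMulVec_mulVec, op_smul_eq_smul,
    smul_smul]

lemma dotProduct_mulVec (x y : n → ℝ) :
    x ⬝ᵥ weightedGram π m *ᵥ y = ∑ g, π g * (x ⬝ᵥ m g) * (m g ⬝ᵥ y) := by
  simp only [mulVec, dotProduct_sum, dotProduct_smul, smul_eq_mul]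
  exact sum_congr rfl fun g _ => by ring

omit [Fintype n] in
lemma isSymm : (weightedGram π m).IsSymm := by
  simp only [IsSymm, weightedGram, transpose_sum, transpose_smul, transpose_vecMulVec]

variable {π}

lemma posSemidef (hπ : ∀ g, 0 ≤ π g) : (weightedGram π m).PosSemidef :=
  posSemidef_sum _ fun g _ => (posSemidef_vecMulVec_self_star (m g)).smul (hπ g)

variable [DecidableEq n]

lemma posDef (hπ : ∀ g, 0 ≤ π g) (hdet : IsUnit (weightedGram π m).det) :
    (weightedGram π m).PosDef :=
  (posSemidef m hπ).posDef_iff_isUnit.mpr ((isUnit_iff_isUnit_det _).mpr hdet)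

lemma mulVec_inv_mulVec (hdet : IsUnit (weightedGram π m).det) (x : n → ℝ) :
    weightedGram π m *ᵥ (weightedGram π m)⁻¹ *ᵥ x = x := by
  rw [mulVec_mulVec, mul_nonsing_inv _ hdet, one_mulVec]

lemma sum_mul_sq_dotProduct_inv_mulVec (hdet : IsUnit (weightedGram π m).det) (g : ι) :
    ∑ j, π j * (m g ⬝ᵥ (weightedGram π m)⁻¹ *ᵥ m j) ^ 2 =
      m g ⬝ᵥ (weightedGram π m)⁻¹ *ᵥ m g := by
  set P := (weightedGram π m)⁻¹
  have hP : P.IsSymm := (isSymm π m).inv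
  calc ∑ j, π j * (m g ⬝ᵥ P *ᵥ m j) ^ 2
      = P *ᵥ m g ⬝ᵥ weightedGram π m *ᵥ P *ᵥ m g := by
        rw [dotProduct_mulVec]
        refine sum_congr rfl fun j _ => ?_
        rw [hP.dotProduct_mulVec_comm_s2, dotProduct_comm (P *ᵥ m g)]
        ring
    _ = m g ⬝ᵥ P *ᵥ m g := by
        rw [mulVec_inv_mulVec m hdet, dotProduct_comm]

lemma exists_dotProduct_inv_mulVec_ne_zero (hdet : IsUnit (weightedGram π m).det) {x : n → ℝ}
    (hx : x ≠ 0) : ∃ g, x ⬝ᵥ (weightedGram π m)⁻¹ *ᵥ m g ≠ 0 := by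
  by_contra! h
  have hP : (weightedGram π m)⁻¹.IsSymm := (isSymm π m).inv
  apply hx
  rw [← mulVec_inv_mulVec m hdet x, mulVec]
  exact sum_eq_zero fun g _ => by rw [hP.dotProduct_mulVec_comm_s2, h g, mul_zero, zero_smul]

lemma sum_sq_mul_sq_dotProduct_inv_mulVec_pos (hπ : ∀ g, 0 < π g)
    (hdet : IsUnit (weightedGram π m).det) {x : n → ℝ} (hx : x ≠ 0) :
    0 < ∑ g, π g ^ 2 * (x ⬝ᵥ (weightedGram π m)⁻¹ *ᵥ m g) ^ 2 *
      (m g ⬝ᵥ (weightedGram π m)⁻¹ *ᵥ m g) := by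
  have hP : (weightedGram π m)⁻¹.PosDef := (posDef m (fun g => (hπ g).le) hdet).inv
  obtain ⟨g, hg⟩ := exists_dotProduct_inv_mulVec_ne_zero m hdet hx
  have hmg : m g ≠ 0 := by rintro h; simp [h] at hg
  refine sum_pos' (fun j _ => ?_) ⟨g, mem_univ g, ?_⟩
  · exact mul_nonneg (by positivity) (hP.posSemidef.dotProduct_mulVec_nonneg (m j))
  · exact mul_pos (by have := hπ g; positivity) (hP.dotProduct_mulVec_pos hmg)

lemma sum_sq_single_sub_mul_dotProduct_inv_mulVec [DecidableEq ι]
    (hdet : IsUnit (weightedGram π m).det) (g : ι) :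
    ∑ j, ((Pi.single g 1 : ι → ℝ) j - π g * (m g ⬝ᵥ (weightedGram π m)⁻¹ *ᵥ m j)) ^ 2 * π j =
      π g * (1 - π g * (m g ⬝ᵥ (weightedGram π m)⁻¹ *ᵥ m g)) := by
  set s := fun j => m g ⬝ᵥ (weightedGram π m)⁻¹ *ᵥ m j
  calc ∑ j, ((Pi.single g 1 : ι → ℝ) j - π g * s j) ^ 2 * π j
      = ∑ j, ((Pi.single g 1 : ι → ℝ) j * (π j * (1 - 2 * π g * s j)) +
          π g ^ 2 * (π j * s j ^ 2)) :=
        sum_congr rfl fun j _ => by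
          rcases eq_or_ne j g with rfl | hj <;> simp [*] <;> ring
    _ = π g * (1 - 2 * π g * s g) + π g ^ 2 * s g := by
        rw [sum_add_distrib, ← mul_sum, sum_mul_sq_dotProduct_inv_mulVec m hdet g]
        simp [s, Pi.single_apply]
    _ = π g * (1 - π g * s g) := by ring

end weightedGram

theorem crv_downward_bias_correct_specification_general
    {Ω : Type*} [MeasureSpace Ω] [IsProbabilityMeasure (ℙ : Measure Ω)]
    (k G : ℕ) (hk : 0 < k)
    (m : Fin G → Fin k → ℝ) (π : Fin G → ℝ)
    (hπ : ∀ g, 0 < π g)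
    (σ2 : ℝ) (hσ2 : 0 < σ2)
    (Q : Matrix (Fin k) (Fin k) ℝ)
    (hQ : Q = ∑ g, π g • vecMulVec (m g) (m g))
    (hQinv : IsUnit Q.det)
    (e1 : Fin k → ℝ) (he1 : e1 = Pi.single ⟨0, hk⟩ 1)
    (ω : Fin G → ℝ)
    (hω : ∀ g, ω g = e1 ⬝ᵥ ((Q⁻¹ * (π g • vecMulVec (m g) (m g)) * Q⁻¹) *ᵥ e1))
    (B : Fin G → Ω → ℝ)
    (hBmeas : ∀ g, Measurable (B g))
    (hBindep : iIndepFun B ℙ)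
    (hBlaw : ∀ g, Measure.map (B g) ℙ = gaussianReal 0 (Real.toNNReal (π g * σ2)))
    (W : Fin G → Ω → ℝ)
    (hW : ∀ g ω', W g ω' = (e1 ⬝ᵥ (Q⁻¹ *ᵥ m g)) *
      (B g ω' - π g * (m g ⬝ᵥ (Q⁻¹ *ᵥ (∑ j, B j ω' • m j))))) :
    (∫ ω', ∑ g, (W g ω') ^ 2 ∂ℙ) < σ2 * ∑ g, ω g := by
  obtain rfl : Q = weightedGram π m := hQ
  have hcoeff := weightedGram.sum_sq_single_sub_mul_dotProduct_inv_mulVec m hQinv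
  have hpos := weightedGram.sum_sq_mul_sq_dotProduct_inv_mulVec_pos m hπ hQinv
    (by simp [he1] : e1 ≠ 0)
  have hP := (weightedGram.isSymm π m).inv
  set P := (weightedGram π m)⁻¹
  have hB : ∀ j, HasLaw (B j) (gaussianReal 0 (π j * σ2).toNNReal) ℙ :=
    fun j => ⟨(hBmeas j).aemeasurable, hBlaw j⟩
  have hv : ∀ j, ((π j * σ2).toNNReal : ℝ) = π j * σ2 :=
    fun j => Real.coe_toNNReal _ (mul_pos (hπ j) hσ2).le
  have hW_eq : ∀ g, W g = fun ω' => e1 ⬝ᵥ P *ᵥ m g *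
      ∑ j, ((Pi.single g 1 : _ → ℝ) j - π g * (m g ⬝ᵥ P *ᵥ m j)) * B j ω' := fun g => by
    ext ω'
    rw [hW, sub_mul_dotProduct_mulVec_sum_smul P m (π g) g fun j => B j ω']
  have hEW : ∀ g, ∫ ω', W g ω' ^ 2 ∂ℙ =
      σ2 * (π g * (e1 ⬝ᵥ P *ᵥ m g) ^ 2) -
        σ2 * (π g ^ 2 * (e1 ⬝ᵥ P *ᵥ m g) ^ 2 * (m g ⬝ᵥ P *ᵥ m g)) := fun g => by
    simp only [hW_eq, mul_pow, integral_const_mul,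
      integral_sum_mul_sq_of_iIndepFun_gaussianReal hB hBindep, hv]
    simp only [← mul_assoc _ (π _) σ2, ← sum_mul, hcoeff]
    ring
  have hWL2 : ∀ g, MemLp (W g) 2 ℙ := fun g => hW_eq g ▸
    (memLp_finsetSum univ fun j _ => ((hB j).memLp_of_gaussianReal_s2 2).const_mul _).const_mul _
  rw [integral_finsetSum _ fun g _ => (hWL2 g).integrable_sq]
  simp only [hEW, hω, hP.dotProduct_mul_smul_vecMulVec_mul_mulVec_s2, sum_sub_distrib, ← mul_sum]
  linarith [mul_pos hσ2 hpos]

/-- Under correct specification and homoskedasticity, the large-sample limit of the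
cluster-robust variance estimator is strictly downward biased for the asymptotic
variance of the RD estimator. -/
theorem crv_downward_bias_correct_specification
    {Ω : Type*} [MeasureSpace Ω] [IsProbabilityMeasure (ℙ : Measure Ω)]
    (k G : ℕ) (hk : 0 < k) (hG : 0 < G)
    (m : Fin G → Fin k → ℝ) (π : Fin G → ℝ)
    (hπ : ∀ g, 0 < π g) (hπ1 : ∑ g, π g = 1)
    (σ2 : ℝ) (hσ2 : 0 < σ2)
    (Q : Matrix (Fin k) (Fin k) ℝ)
    (hQ : Q = ∑ g, π g • vecMulVec (m g) (m g))
    (hQinv : IsUnit Q.det)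
    (e1 : Fin k → ℝ) (he1 : e1 = Pi.single ⟨0, hk⟩ 1)
    (ω : Fin G → ℝ)
    (hω : ∀ g, ω g = e1 ⬝ᵥ ((Q⁻¹ * (π g • vecMulVec (m g) (m g)) * Q⁻¹) *ᵥ e1))
    (B : Fin G → Ω → ℝ)
    (hBmeas : ∀ g, Measurable (B g))
    (hBindep : iIndepFun B ℙ)
    (hBlaw : ∀ g, Measure.map (B g) ℙ = gaussianReal 0 (Real.toNNReal (π g * σ2)))
    (W : Fin G → Ω → ℝ)
    (hW : ∀ g ω', W g ω' = (e1 ⬝ᵥ (Q⁻¹ *ᵥ m g)) *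
      (B g ω' - π g * (m g ⬝ᵥ (Q⁻¹ *ᵥ (∑ j, B j ω' • m j))))) :
    (∫ ω', ∑ g, (W g ω') ^ 2 ∂ℙ) < σ2 * ∑ g, ω g :=
  crv_downward_bias_correct_specification_general k G hk m π hπ σ2 hσ2 Q hQ hQinv e1 he1 ω hω B
    hBmeas hBindep hBlaw W hW
end

section
/- For any real constants c_1, …, c_G and any fixed θ ∈ ℝ^k and map m: {x_1, …, x_G} → ℝ^k, define δ_g = μ_g − m(x_g)ᵀθ and u_i = Y_i − m(X_i)ᵀθ. Then E[ (1/N) Σ_{g=1}^G c_g² ( Σ_{i=1}^N 1{X_i = x_g} u_i )² ] = Σ_{g=1}^G c_g² π_g (σ_g² + δ_g²) + (N−1) Σ_{g=1}^G c_g² π_g² δ_g². -/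
/-!
Fix a cluster `g`. On the event `{X = x_g}` the residual `u = Y - m(X)ᵀθ` equals `Y - m(x_g)ᵀθ`,
so the summands `Z_i = 1{X_i = x_g} u_i` are i.i.d. copies of one square-integrable variable `Z`.
Since the variance of a sum of independent variables is additive,
`E[(∑ Z_i)²] = N E[Z²] + N (N - 1) (E Z)²`. Finally `E Z = π_g δ_g`, and the parallel-axis formula
around the conditional mean `μ_g` gives `E[Z²] = π_g (σ_g² + δ_g²)`.
-/

open MeasureTheory ProbabilityTheory Matrix Finset

namespace ProbabilityTheory

variable {Ω : Type*} [MeasurableSpace Ω] {μ : Measure Ω}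

theorem integral_sq_sum_of_identDistrib_of_pairwise_indepFun {ι : Type*} [Fintype ι]
    [IsProbabilityMeasure μ] {Z : ι → Ω → ℝ} {i₀ : ι} (hZ : MemLp (Z i₀) 2 μ)
    (hident : ∀ i, IdentDistrib (Z i) (Z i₀) μ μ)
    (hindep : Pairwise fun i j => IndepFun (Z i) (Z j) μ) :
    ∫ ω, (∑ i, Z i ω) ^ 2 ∂μ = Fintype.card ι * ∫ ω, Z i₀ ω ^ 2 ∂μ
      + Fintype.card ι * (Fintype.card ι - 1) * (∫ ω, Z i₀ ω ∂μ) ^ 2 := by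
  have hmemLp : ∀ i, MemLp (Z i) 2 μ := fun i => (hident i).memLp_iff.mpr hZ
  have hvar : variance (∑ i, Z i) μ = Fintype.card ι * variance (Z i₀) μ := by
    rw [IndepFun.variance_sum (fun i _ => hmemLp i) fun i _ j _ hij => hindep hij]
    simp [fun i => (hident i).variance_eq]
  have hmean : ∫ ω, ∑ i, Z i ω ∂μ = Fintype.card ι * ∫ ω, Z i₀ ω ∂μ := by
    rw [integral_finsetSum _ fun i _ => (hmemLp i).integrable one_le_two]
    simp [fun i => (hident i).integral_eq]
  rw [variance_eq_sub (memLp_finsetSum' _ fun i _ => hmemLp i), variance_eq_sub hZ] at hvar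
  simp only [Pi.pow_apply, Finset.sum_apply, hmean] at hvar
  linear_combination hvar

end ProbabilityTheory

namespace MeasureTheory

variable {Ω : Type*} [MeasurableSpace Ω] {μ : Measure Ω}

theorem integral_ite_eq_setIntegral {E : Type*} [NormedAddCommGroup E] [NormedSpace ℝ E]
    {p : Ω → Prop} [DecidablePred p] (hp : MeasurableSet {ω | p ω}) (f : Ω → E) :
    ∫ ω, (if p ω then f ω else 0) ∂μ = ∫ ω in {ω | p ω}, f ω ∂μ := by
  rw [← integral_indicator hp]
  congr with ω
  simp [Set.indicator_apply]

theorem integral_sub_const_sq_eq [IsFiniteMeasure μ] {Y : Ω → ℝ} (hY : MemLp Y 2 μ) {m : ℝ}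
    (hm : ∫ ω, Y ω ∂μ = μ.real Set.univ * m) (C : ℝ) :
    ∫ ω, (Y ω - C) ^ 2 ∂μ = ∫ ω, (Y ω - m) ^ 2 ∂μ + μ.real Set.univ * (m - C) ^ 2 := by
  have hYm : MemLp (fun ω => Y ω - m) 2 μ := hY.sub (memLp_const m)
  have hcentered : ∫ ω, (Y ω - m) ∂μ = 0 := by
    rw [integral_sub (hY.integrable one_le_two) (integrable_const m), hm, integral_const,
      smul_eq_mul, sub_self]
  calc ∫ ω, (Y ω - C) ^ 2 ∂μ
      = ∫ ω, ((Y ω - m) ^ 2 + 2 * (m - C) * (Y ω - m) + (m - C) ^ 2) ∂μ := by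
        congr with ω; ring
    _ = ∫ ω, (Y ω - m) ^ 2 ∂μ + μ.real Set.univ * (m - C) ^ 2 := by
        have hsq : Integrable (fun ω => (Y ω - m) ^ 2) μ := hYm.integrable_sq
        have hlin : Integrable (fun ω => 2 * (m - C) * (Y ω - m)) μ :=
          (hYm.integrable one_le_two).const_mul _
        rw [integral_add (hsq.fun_add hlin) (integrable_const _), integral_add hsq hlin,
          integral_const_mul, hcentered, integral_const, smul_eq_mul]
        ring

end MeasureTheory

noncomputable def clusterResidual (a C : ℝ) (p : ℝ × ℝ) : ℝ :=
  if p.1 = a then p.2 - C else 0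

theorem measurable_clusterResidual (a C : ℝ) : Measurable (clusterResidual a C) :=
  Measurable.ite (measurable_fst (measurableSet_singleton a)) (measurable_snd.sub_const C)
    measurable_const

theorem ite_sub_eq_clusterResidual (f : ℝ → ℝ) (a x y : ℝ) :
    (if x = a then y - f x else 0) = clusterResidual a (f a) (x, y) := by
  simp only [clusterResidual]
  split_ifs with h
  · rw [h]
  · rfl

section ClusterMoments

variable {Ω : Type*} [MeasurableSpace Ω] {μ : Measure Ω} [IsFiniteMeasure μ] {X Y : Ω → ℝ}
  {a m : ℝ}

theorem memLp_clusterResidual (hX : Measurable X) (hY : MemLp Y 2 μ) (C : ℝ) :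
    MemLp (fun ω => clusterResidual a C (X ω, Y ω)) 2 μ := by
  have hind : (fun ω => clusterResidual a C (X ω, Y ω))
      = {ω | X ω = a}.indicator fun ω => Y ω - C := by
    ext ω; simp [clusterResidual, Set.indicator_apply]
  rw [hind]
  exact (hY.sub (memLp_const C)).indicator (hX (measurableSet_singleton a))

theorem integral_clusterResidual (hX : Measurable X) (hY : MemLp Y 2 μ)
    (hm : ∫ ω, (if X ω = a then Y ω else 0) ∂μ = μ.real {ω | X ω = a} * m) (C : ℝ) :
    ∫ ω, clusterResidual a C (X ω, Y ω) ∂μ = μ.real {ω | X ω = a} * (m - C) := by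
  have hA : MeasurableSet {ω | X ω = a} := hX (measurableSet_singleton a)
  rw [integral_ite_eq_setIntegral hA] at hm
  simp only [clusterResidual]
  rw [integral_ite_eq_setIntegral hA, integral_sub (hY.integrable one_le_two).integrableOn
    (integrable_const C), hm, setIntegral_const, smul_eq_mul]
  ring

theorem integral_clusterResidual_sq (hX : Measurable X) (hY : MemLp Y 2 μ)
    (hm : ∫ ω, (if X ω = a then Y ω else 0) ∂μ = μ.real {ω | X ω = a} * m) {s : ℝ}
    (hs : ∫ ω, (if X ω = a then (Y ω - m) ^ 2 else 0) ∂μ = μ.real {ω | X ω = a} * s)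
    (C : ℝ) :
    ∫ ω, clusterResidual a C (X ω, Y ω) ^ 2 ∂μ = μ.real {ω | X ω = a} * (s + (m - C) ^ 2) := by
  have hA : MeasurableSet {ω | X ω = a} := hX (measurableSet_singleton a)
  rw [integral_ite_eq_setIntegral hA, ← measureReal_restrict_apply_univ] at hm hs
  have hsq : ∀ ω, clusterResidual a C (X ω, Y ω) ^ 2
      = if X ω = a then (Y ω - C) ^ 2 else 0 := fun ω => by
    simp only [clusterResidual]; split_ifs <;> simp
  simp only [hsq]
  rw [integral_ite_eq_setIntegral hA, integral_sub_const_sq_eq (hY.restrict _) hm, hs,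
    measureReal_restrict_apply_univ]
  ring

end ClusterMoments

section IidSample

variable {Ω : Type*} [MeasurableSpace Ω] {μ : Measure Ω} {ι : Type*} [Fintype ι]
  {X Y : ι → Ω → ℝ} {i₀ : ι}

theorem memLp_sum_clusterResidual [IsFiniteMeasure μ] (hX : Measurable (X i₀))
    (hY : MemLp (Y i₀) 2 μ)
    (hident : ∀ i, IdentDistrib (fun ω => (X i ω, Y i ω)) (fun ω => (X i₀ ω, Y i₀ ω)) μ μ)
    (a C : ℝ) : MemLp (fun ω => ∑ i, clusterResidual a C (X i ω, Y i ω)) 2 μ :=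
  memLp_finsetSum _ fun i _ => ((hident i).comp (measurable_clusterResidual a C)).memLp_iff.mpr
    (memLp_clusterResidual hX hY C)

theorem integral_sq_sum_clusterResidual [IsProbabilityMeasure μ] (hX : Measurable (X i₀))
    (hY : MemLp (Y i₀) 2 μ)
    (hident : ∀ i, IdentDistrib (fun ω => (X i ω, Y i ω)) (fun ω => (X i₀ ω, Y i₀ ω)) μ μ)
    (hindep : iIndepFun (fun i ω => (X i ω, Y i ω)) μ) {a m s : ℝ}
    (hm : ∫ ω, (if X i₀ ω = a then Y i₀ ω else 0) ∂μ = μ.real {ω | X i₀ ω = a} * m)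
    (hs : ∫ ω, (if X i₀ ω = a then (Y i₀ ω - m) ^ 2 else 0) ∂μ = μ.real {ω | X i₀ ω = a} * s)
    (C : ℝ) :
    ∫ ω, (∑ i, clusterResidual a C (X i ω, Y i ω)) ^ 2 ∂μ
      = Fintype.card ι * (μ.real {ω | X i₀ ω = a} * (s + (m - C) ^ 2))
        + Fintype.card ι * (Fintype.card ι - 1) * (μ.real {ω | X i₀ ω = a} * (m - C)) ^ 2 := by
  have hres := measurable_clusterResidual a C
  rw [integral_sq_sum_of_identDistrib_of_pairwise_indepFun
    (Z := fun i ω => clusterResidual a C (X i ω, Y i ω)) (memLp_clusterResidual hX hY C)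
    (fun i => (hident i).comp hres) fun i j hij => (hindep.indepFun hij).comp hres hres,
    integral_clusterResidual hX hY hm, integral_clusterResidual_sq hX hY hm hs]

end IidSample

theorem expected_within_cluster_square_identity_general
    {Ω : Type*} [MeasureSpace Ω] [IsProbabilityMeasure (ℙ : Measure Ω)]
    (N G k : ℕ) (hN : 0 < N)
    (X Y : Fin N → Ω → ℝ)
    (hXmeas : ∀ i, Measurable (X i)) (hYmeas : ∀ i, Measurable (Y i))
    (hindep : iIndepFun (fun i ω => (X i ω, Y i ω)) ℙ)
    (hident : ∀ i, Measure.map (fun ω => (X i ω, Y i ω)) ℙ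
      = Measure.map (fun ω => (X ⟨0, hN⟩ ω, Y ⟨0, hN⟩ ω)) ℙ)
    (x : Fin G → ℝ)
    (π : Fin G → ℝ)
    (hπ : ∀ g, π g = (ℙ {ω | X ⟨0, hN⟩ ω = x g}).toReal)
    (hπpos : ∀ g, 0 < π g)
    (hY2 : Integrable (fun ω => (Y ⟨0, hN⟩ ω) ^ 2) ℙ)
    (μ σsq : Fin G → ℝ)
    (hμ : ∀ g, μ g =
      (∫ ω, (if X ⟨0, hN⟩ ω = x g then Y ⟨0, hN⟩ ω else 0) ∂ℙ) / π g)
    (hσsq : ∀ g, σsq g =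
      (∫ ω, (if X ⟨0, hN⟩ ω = x g then (Y ⟨0, hN⟩ ω - μ g) ^ 2 else 0) ∂ℙ) / π g)
    (c : Fin G → ℝ) (θ : Fin k → ℝ) (m : ℝ → Fin k → ℝ)
    (δ : Fin G → ℝ) (hδ : ∀ g, δ g = μ g - m (x g) ⬝ᵥ θ)
    (u : Fin N → Ω → ℝ) (hu : ∀ i ω, u i ω = Y i ω - m (X i ω) ⬝ᵥ θ) :
    ∫ ω, (1 / (N : ℝ)) *
        ∑ g, (c g) ^ 2 * (∑ i, (if X i ω = x g then u i ω else 0)) ^ 2 ∂ℙ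
      = ∑ g, (c g) ^ 2 * π g * (σsq g + (δ g) ^ 2)
        + ((N : ℝ) - 1) * ∑ g, (c g) ^ 2 * (π g) ^ 2 * (δ g) ^ 2 := by
  set o : Fin N := ⟨0, hN⟩
  have hY0 : MemLp (Y o) 2 ℙ :=
    (memLp_two_iff_integrable_sq (hYmeas o).aestronglyMeasurable).2 hY2
  have hpair : ∀ i, IdentDistrib (fun ω => (X i ω, Y i ω)) (fun ω => (X o ω, Y o ω)) ℙ ℙ :=
    fun i => ⟨((hXmeas i).prodMk (hYmeas i)).aemeasurable,
      ((hXmeas o).prodMk (hYmeas o)).aemeasurable, hident i⟩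
  have hmean : ∀ g, ∫ ω, (if X o ω = x g then Y o ω else 0)
      = (ℙ : Measure Ω).real {ω | X o ω = x g} * μ g := fun g => by
    rw [hμ g, measureReal_def, ← hπ g, mul_div_cancel₀ _ (hπpos g).ne']
  have hvar : ∀ g, ∫ ω, (if X o ω = x g then (Y o ω - μ g) ^ 2 else 0)
      = (ℙ : Measure Ω).real {ω | X o ω = x g} * σsq g := fun g => by
    rw [hσsq g, measureReal_def, ← hπ g, mul_div_cancel₀ _ (hπpos g).ne']
  have hcluster : ∀ g ω, (∑ i, if X i ω = x g then u i ω else 0)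
      = ∑ i, clusterResidual (x g) (m (x g) ⬝ᵥ θ) (X i ω, Y i ω) := fun g ω =>
    Finset.sum_congr rfl fun i _ => by
      rw [hu]; exact ite_sub_eq_clusterResidual (fun t => m t ⬝ᵥ θ) _ _ _
  simp only [hcluster]
  rw [integral_const_mul, integral_finsetSum _ fun g _ =>
    ((memLp_sum_clusterResidual (hXmeas o) hY0 hpair _ _).integrable_sq).const_mul _]
  simp only [integral_const_mul, integral_sq_sum_clusterResidual (hXmeas o) hY0 hpair hindep
    (hmean _) (hvar _), measureReal_def, ← hπ, ← hδ, Fintype.card_fin, Finset.mul_sum,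
    ← Finset.sum_add_distrib]
  refine Finset.sum_congr rfl fun g _ => ?_
  field_simp

/-- Finite-sample expectation identity underlying Theorem 2 of the paper: the expected
value of the (normalized) sum of squared within-cluster residual sums equals the EHW
term plus a misspecification term of order N−1. -/
theorem expected_within_cluster_square_identity
    {Ω : Type*} [MeasureSpace Ω] [IsProbabilityMeasure (ℙ : Measure Ω)]
    (N G k : ℕ) (hN : 0 < N) (hG : 0 < G) (hk : 0 < k)
    (X Y : Fin N → Ω → ℝ)
    (hXmeas : ∀ i, Measurable (X i)) (hYmeas : ∀ i, Measurable (Y i))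
    (hindep : iIndepFun (fun i ω => (X i ω, Y i ω)) ℙ)
    (hident : ∀ i, Measure.map (fun ω => (X i ω, Y i ω)) ℙ
      = Measure.map (fun ω => (X ⟨0, hN⟩ ω, Y ⟨0, hN⟩ ω)) ℙ)
    (x : Fin G → ℝ) (hxinj : Function.Injective x)
    (hsupp : ∀ i ω, X i ω ∈ Set.range x)
    (π : Fin G → ℝ)
    (hπ : ∀ g, π g = (ℙ {ω | X ⟨0, hN⟩ ω = x g}).toReal)
    (hπpos : ∀ g, 0 < π g)
    (hY2 : Integrable (fun ω => (Y ⟨0, hN⟩ ω) ^ 2) ℙ)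
    (μ σsq : Fin G → ℝ)
    (hμ : ∀ g, μ g =
      (∫ ω, (if X ⟨0, hN⟩ ω = x g then Y ⟨0, hN⟩ ω else 0) ∂ℙ) / π g)
    (hσsq : ∀ g, σsq g =
      (∫ ω, (if X ⟨0, hN⟩ ω = x g then (Y ⟨0, hN⟩ ω - μ g) ^ 2 else 0) ∂ℙ) / π g)
    (c : Fin G → ℝ) (θ : Fin k → ℝ) (m : ℝ → Fin k → ℝ)
    (δ : Fin G → ℝ) (hδ : ∀ g, δ g = μ g - m (x g) ⬝ᵥ θ)
    (u : Fin N → Ω → ℝ) (hu : ∀ i ω, u i ω = Y i ω - m (X i ω) ⬝ᵥ θ) :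
    ∫ ω, (1 / (N : ℝ)) *
        ∑ g, (c g) ^ 2 * (∑ i, (if X i ω = x g then u i ω else 0)) ^ 2 ∂ℙ
      = ∑ g, (c g) ^ 2 * π g * (σsq g + (δ g) ^ 2)
        + ((N : ℝ) - 1) * ∑ g, (c g) ^ 2 * (π g) ^ 2 * (δ g) ^ 2 :=
  expected_within_cluster_square_identity_general N G k hN X Y hXmeas hYmeas hindep hident x π hπ
    hπpos hY2 μ σsq hμ hσsq c θ m δ hδ u hu
end

section
/- Let ε_i = Y_i − E[Y_i | X_i], let a_1, …, a_G be real constants, and define S = (1/N) Σ_{1 ≤ j < i ≤ N} Σ_{g=1}^G a_g 1{X_i = x_g} 1{X_j = x_g} ε_i ε_j. Then E[S] = 0 and Var(S) = ((N−1)/(2N)) Σ_{g=1}^G a_g² π_g² σ_g⁴. -/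
/-!
Put `Zᵢ = (Xᵢ, Yᵢ)` and `w_g(x, y) = 1{x = x_g} (y - μ_g)`, so that `1{Xᵢ = x_g} εᵢ = w_g(Zᵢ)` and
`N S = ∑_{j<i} K(Zᵢ, Zⱼ)` with the kernel `K(p, q) = ∑_g a_g w_g(p) w_g(q)`. Each `w_g(Zᵢ)` is
centred, `w_g w_h = 0` for `g ≠ h`, and `E[w_g(Zᵢ)²] = π_g σ_g²`. In `E[K(Zᵢ, Zⱼ) K(Zₖ, Zₗ)]`
with `j < i`, `l < k`, an index occurring only once contributes a centred factor independent of
the others, so only the `N(N - 1)/2` diagonal terms `(i, j) = (k, l)` survive, each equal to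
`∑_g a_g² π_g² σ_g⁴`.
-/

open MeasureTheory ProbabilityTheory Finset

namespace ProbabilityTheory

variable {Ω β ι : Type*} [MeasurableSpace Ω] [MeasurableSpace β] {P : Measure Ω}

lemma IndepFun.memLp_two_mul {U V : Ω → ℝ} (hUV : IndepFun U V P) (hU : MemLp U 2 P)
    (hV : MemLp V 2 P) : MemLp (fun ω => U ω * V ω) 2 P := by
  refine (memLp_two_iff_integrable_sq (hU.1.mul hV.1)).2 ?_
  have hsq := (hUV.comp (measurable_id.pow_const 2) (measurable_id.pow_const 2)).integrable_mul
    hU.integrable_sq hV.integrable_sq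
  exact hsq.congr (.of_forall fun ω => by simp [mul_pow])

lemma iIndepFun.indepFun_restrict_of_notMem {Z : ι → Ω → β} (hind : iIndepFun Z P)
    (hZ : ∀ i, Measurable (Z i)) {i : ι} {s : Finset ι} (hi : i ∉ s) :
    IndepFun (Z i) (fun ω (m : s) => Z m ω) P :=
  (hind.indepFun_finset {i} s (disjoint_singleton_left.2 hi) hZ).comp
    (measurable_pi_apply (⟨i, mem_singleton_self i⟩ : ({i} : Finset ι))) measurable_id

end ProbabilityTheory

section FiniteRankKernel

variable {κ β : Type*} [Fintype κ]

def finiteRankKernel (a : κ → ℝ) (w : κ → β → ℝ) (p q : β) : ℝ :=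
  ∑ g, a g * (w g p * w g q)

lemma finiteRankKernel_comm (a : κ → ℝ) (w : κ → β → ℝ) (p q : β) :
    finiteRankKernel a w p q = finiteRankKernel a w q p := by
  simp only [finiteRankKernel, mul_comm (w _ p)]

lemma finiteRankKernel_sq {w : κ → β → ℝ} (horth : ∀ g h p, g ≠ h → w g p * w h p = 0)
    (a : κ → ℝ) (p q : β) :
    finiteRankKernel a w p q ^ 2 = ∑ g, a g ^ 2 * (w g p ^ 2 * w g q ^ 2) := by
  classical
  rw [sq, finiteRankKernel, sum_mul_sum]
  refine sum_congr rfl fun g _ => ?_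
  rw [sum_eq_single g (fun h _ hgh => ?_) (by simp)]
  · ring
  · have := horth g h p hgh.symm
    linear_combination a g * a h * w g q * w h q * this

end FiniteRankKernel

section DegenerateUStatistic

variable {Ω ι κ β : Type*} [MeasurableSpace Ω] [MeasurableSpace β] [Fintype κ] {P : Measure Ω}
  {Z : ι → Ω → β} {a : κ → ℝ} {w : κ → β → ℝ}

lemma memLp_finiteRankKernel (hind : iIndepFun Z P)
    (hw : ∀ g, Measurable (w g)) (hL2 : ∀ i g, MemLp (fun ω => w g (Z i ω)) 2 P)
    {i j : ι} (hij : i ≠ j) :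
    MemLp (fun ω => finiteRankKernel a w (Z i ω) (Z j ω)) 2 P :=
  memLp_finsetSum _ fun g _ =>
    (((hind.indepFun hij).comp (hw g) (hw g)).memLp_two_mul (hL2 i g) (hL2 j g)).const_mul (a g)

lemma integral_finiteRankKernel (hind : iIndepFun Z P) (hw : ∀ g, Measurable (w g))
    (hL2 : ∀ i g, MemLp (fun ω => w g (Z i ω)) 2 P) (hmean : ∀ i g, ∫ ω, w g (Z i ω) ∂P = 0)
    {i j : ι} (hij : i ≠ j) :
    ∫ ω, finiteRankKernel a w (Z i ω) (Z j ω) ∂P = 0 := by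
  have hindep (g : κ) : IndepFun (fun ω => w g (Z i ω)) (fun ω => w g (Z j ω)) P :=
    (hind.indepFun hij).comp (hw g) (hw g)
  unfold finiteRankKernel
  rw [integral_finsetSum _ fun g _ => ?_]
  · refine sum_eq_zero fun g _ => ?_
    rw [integral_const_mul, (hindep g).integral_fun_mul_eq_mul_integral (hL2 i g).1 (hL2 j g).1,
      hmean, zero_mul, mul_zero]
  · exact ((hL2 i g).integrable_mul (hL2 j g)).const_mul (a g)

lemma integral_finiteRankKernel_mul_eq_zero (hZ : ∀ i, Measurable (Z i)) (hind : iIndepFun Z P)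
    (hw : ∀ g, Measurable (w g)) (hL2 : ∀ i g, MemLp (fun ω => w g (Z i ω)) 2 P)
    (hmean : ∀ i g, ∫ ω, w g (Z i ω) ∂P = 0) {i j k l : ι}
    (hij : i ≠ j) (hik : i ≠ k) (hil : i ≠ l) (hkl : k ≠ l) :
    ∫ ω, finiteRankKernel a w (Z i ω) (Z j ω) * finiteRankKernel a w (Z k ω) (Z l ω) ∂P = 0 := by
  classical
  have := hind.isProbabilityMeasure
  have hTL2 := memLp_finiteRankKernel (a := a) hind hw hL2 hkl
  have hi : i ∉ ({j, k, l} : Finset ι) := by simp [hij, hik, hil]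
  have hindep (g : κ) : IndepFun (fun ω => w g (Z i ω))
      (fun ω => w g (Z j ω) * finiteRankKernel a w (Z k ω) (Z l ω)) P := by
    let s : Finset ι := {j, k, l}
    let R (t : s → β) : ℝ :=
      w g (t ⟨j, by simp [s]⟩) * finiteRankKernel a w (t ⟨k, by simp [s]⟩) (t ⟨l, by simp [s]⟩)
    have hR : Measurable R := by unfold R finiteRankKernel; fun_prop
    exact (hind.indepFun_restrict_of_notMem hZ hi).comp (hw g) hR
  have hsplit (ω : Ω) : finiteRankKernel a w (Z i ω) (Z j ω) * finiteRankKernel a w (Z k ω) (Z l ω)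
      = ∑ g, a g * (w g (Z i ω) * (w g (Z j ω) * finiteRankKernel a w (Z k ω) (Z l ω))) := by
    rw [finiteRankKernel, sum_mul]
    exact sum_congr rfl fun g _ => by ring
  simp_rw [hsplit]
  rw [integral_finsetSum _ fun g _ => ?_]
  · refine sum_eq_zero fun g _ => ?_
    rw [integral_const_mul, (hindep g).integral_fun_mul_eq_mul_integral (hL2 i g).1
      ((hL2 j g).integrable_mul hTL2).1, hmean, zero_mul, mul_zero]
  · exact ((hindep g).integrable_mul ((hL2 i g).integrable one_le_two)
      ((hL2 j g).integrable_mul hTL2)).const_mul (a g)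

lemma integral_finiteRankKernel_sq (hind : iIndepFun Z P)
    (hw : ∀ g, Measurable (w g)) (hL2 : ∀ i g, MemLp (fun ω => w g (Z i ω)) 2 P)
    (horth : ∀ g h p, g ≠ h → w g p * w h p = 0) {i j : ι} (hij : i ≠ j) :
    ∫ ω, finiteRankKernel a w (Z i ω) (Z j ω) ^ 2 ∂P
      = ∑ g, a g ^ 2 * ((∫ ω, w g (Z i ω) ^ 2 ∂P) * ∫ ω, w g (Z j ω) ^ 2 ∂P) := by
  have := hind.isProbabilityMeasure
  have hindep (g : κ) : IndepFun (fun ω => w g (Z i ω) ^ 2) (fun ω => w g (Z j ω) ^ 2) P :=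
    (hind.indepFun hij).comp ((hw g).pow_const 2) ((hw g).pow_const 2)
  simp_rw [finiteRankKernel_sq horth]
  rw [integral_finsetSum _ fun g _ => ?_]
  · refine sum_congr rfl fun g _ => ?_
    rw [integral_const_mul, (hindep g).integral_fun_mul_eq_mul_integral (hL2 i g).integrable_sq.1
      (hL2 j g).integrable_sq.1]
  · exact ((hindep g).integrable_mul (hL2 i g).integrable_sq (hL2 j g).integrable_sq).const_mul _

lemma integral_finiteRankKernel_mul [LinearOrder ι] (hZ : ∀ i, Measurable (Z i))
    (hind : iIndepFun Z P) (hw : ∀ g, Measurable (w g))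
    (hL2 : ∀ i g, MemLp (fun ω => w g (Z i ω)) 2 P) (hmean : ∀ i g, ∫ ω, w g (Z i ω) ∂P = 0)
    (horth : ∀ g h p, g ≠ h → w g p * w h p = 0) {v : κ → ℝ}
    (hv : ∀ i g, ∫ ω, w g (Z i ω) ^ 2 ∂P = v g) {i j k l : ι} (hji : j < i) (hlk : l < k) :
    ∫ ω, finiteRankKernel a w (Z i ω) (Z j ω) * finiteRankKernel a w (Z k ω) (Z l ω) ∂P
      = if (i, j) = (k, l) then ∑ g, a g ^ 2 * v g ^ 2 else 0 := by
  split_ifs with h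
  · obtain ⟨rfl, rfl⟩ := Prod.mk.inj h
    simp_rw [← sq, integral_finiteRankKernel_sq hind hw hL2 horth hji.ne', hv, sq]
  by_cases hi : i ≠ k ∧ i ≠ l
  · exact integral_finiteRankKernel_mul_eq_zero hZ hind hw hL2 hmean hji.ne' hi.1 hi.2 hlk.ne'
  by_cases hj : j ≠ k ∧ j ≠ l
  · simp_rw [finiteRankKernel_comm a w (Z i _)]
    exact integral_finiteRankKernel_mul_eq_zero hZ hind hw hL2 hmean hji.ne hj.1 hj.2 hlk.ne'
  exfalso
  grind

lemma integral_sum_finiteRankKernel (hind : iIndepFun Z P) (hw : ∀ g, Measurable (w g))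
    (hL2 : ∀ i g, MemLp (fun ω => w g (Z i ω)) 2 P) (hmean : ∀ i g, ∫ ω, w g (Z i ω) ∂P = 0)
    {s : Finset (ι × ι)} (hs : ∀ p ∈ s, p.1 ≠ p.2) :
    ∫ ω, ∑ p ∈ s, finiteRankKernel a w (Z p.1 ω) (Z p.2 ω) ∂P = 0 := by
  have := hind.isProbabilityMeasure
  rw [integral_finsetSum _ fun p hp =>
    (memLp_finiteRankKernel hind hw hL2 (hs p hp)).integrable one_le_two]
  exact sum_eq_zero fun p hp => integral_finiteRankKernel hind hw hL2 hmean (hs p hp)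

lemma integral_sum_finiteRankKernel_sq [LinearOrder ι] (hZ : ∀ i, Measurable (Z i))
    (hind : iIndepFun Z P) (hw : ∀ g, Measurable (w g))
    (hL2 : ∀ i g, MemLp (fun ω => w g (Z i ω)) 2 P) (hmean : ∀ i g, ∫ ω, w g (Z i ω) ∂P = 0)
    (horth : ∀ g h p, g ≠ h → w g p * w h p = 0) {v : κ → ℝ}
    (hv : ∀ i g, ∫ ω, w g (Z i ω) ^ 2 ∂P = v g) {s : Finset (ι × ι)} (hs : ∀ p ∈ s, p.2 < p.1) :
    ∫ ω, (∑ p ∈ s, finiteRankKernel a w (Z p.1 ω) (Z p.2 ω)) ^ 2 ∂P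
      = #s * ∑ g, a g ^ 2 * v g ^ 2 := by
  classical
  have hKK (p) (hp : p ∈ s) (q) (hq : q ∈ s) : Integrable (fun ω =>
      finiteRankKernel a w (Z p.1 ω) (Z p.2 ω) * finiteRankKernel a w (Z q.1 ω) (Z q.2 ω)) P :=
    (memLp_finiteRankKernel hind hw hL2 (hs p hp).ne').integrable_mul
      (memLp_finiteRankKernel hind hw hL2 (hs q hq).ne')
  have hsq (ω : Ω) : (∑ p ∈ s, finiteRankKernel a w (Z p.1 ω) (Z p.2 ω)) ^ 2 = ∑ p ∈ s, ∑ q ∈ s,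
      finiteRankKernel a w (Z p.1 ω) (Z p.2 ω) * finiteRankKernel a w (Z q.1 ω) (Z q.2 ω) := by
    rw [sq, sum_mul_sum]
  simp_rw [hsq]
  rw [integral_finsetSum _ fun p hp => integrable_finsetSum _ fun q hq => hKK p hp q hq]
  calc _ = ∑ p ∈ s, ∑ q ∈ s, if p = q then ∑ g, a g ^ 2 * v g ^ 2 else 0 := by
        refine sum_congr rfl fun p hp => ?_
        rw [integral_finsetSum _ fun q hq => hKK p hp q hq]
        exact sum_congr rfl fun q hq =>
          integral_finiteRankKernel_mul hZ hind hw hL2 hmean horth hv (hs p hp) (hs q hq)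
    _ = #s * ∑ g, a g ^ 2 * v g ^ 2 := by
        rw [sum_congr rfl fun p hp => by rw [sum_ite_eq, if_pos hp], sum_const, nsmul_eq_mul]

end DegenerateUStatistic

lemma card_filter_snd_lt_fst (N : ℕ) :
    (#{p : Fin N × Fin N | p.2 < p.1} : ℝ) = N * (N - 1) / 2 := by
  have hcard : #{p : Fin N × Fin N | p.2 < p.1} = ∑ i : Fin N, (i : ℕ) := by
    rw [card_filter, Fintype.sum_prod_type]
    refine sum_congr rfl fun i _ => ?_
    rw [← card_filter, ← Fin.card_Iio]
    congr 1
    ext j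
    simp
  have hgauss := sum_range_id_mul_two N
  rw [← Fin.sum_univ_eq_sum_range] at hgauss
  rw [hcard]
  rcases N with _ | N
  · simp
  · have : ((∑ i : Fin (N + 1), (i : ℕ) : ℕ) : ℝ) * 2 = (N + 1) * N := by exact_mod_cast hgauss
    push_cast at this ⊢
    linarith

section CellResidual

noncomputable def cellResidual (c m : ℝ) (p : ℝ × ℝ) : ℝ := if p.1 = c then p.2 - m else 0

lemma measurable_cellResidual (c m : ℝ) : Measurable (cellResidual c m) :=
  Measurable.ite (measurableSet_eq_fun measurable_fst measurable_const)
    (measurable_snd.sub measurable_const) measurable_const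

lemma cellResidual_sq (c m : ℝ) (p : ℝ × ℝ) :
    cellResidual c m p ^ 2 = if p.1 = c then (p.2 - m) ^ 2 else 0 := by
  unfold cellResidual
  split_ifs <;> simp

lemma cellResidual_mul_cellResidual_of_ne {c c' : ℝ} (h : c ≠ c') (m m' : ℝ) (p : ℝ × ℝ) :
    cellResidual c m p * cellResidual c' m' p = 0 := by
  unfold cellResidual
  split_ifs with h₁ h₂ <;> simp_all

lemma ite_one_mul_eq_cellResidual {c m x y e : ℝ} (he : x = c → e = y - m) :
    (if x = c then 1 else 0) * e = cellResidual c m (x, y) := by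
  unfold cellResidual
  split_ifs with h <;> simp [he, h]

lemma sum_ite_lt_eq_sum_finiteRankKernel {ι κ : Type*} [Fintype ι] [LinearOrder ι] [Fintype κ]
    (a c m : κ → ℝ) (x y e : ι → ℝ) (he : ∀ i g, x i = c g → e i = y i - m g) :
    ∑ i, ∑ j, (if j < i then
        (∑ g, a g * (if x i = c g then (1 : ℝ) else 0) * (if x j = c g then (1 : ℝ) else 0))
          * e i * e j
      else 0)
      = ∑ p ∈ {p : ι × ι | p.2 < p.1},
          finiteRankKernel a (fun g => cellResidual (c g) (m g)) (x p.1, y p.1) (x p.2, y p.2) := by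
  rw [sum_filter, Fintype.sum_prod_type]
  refine sum_congr rfl fun i _ => sum_congr rfl fun j _ => ?_
  split_ifs
  · rw [finiteRankKernel, sum_mul, sum_mul]
    refine sum_congr rfl fun g _ => ?_
    rw [← ite_one_mul_eq_cellResidual (he i g), ← ite_one_mul_eq_cellResidual (he j g)]
    ring
  · rfl

lemma cellResidual_comp_eq_indicator {Ω : Type*} {X Y : Ω → ℝ} (c m : ℝ) :
    (fun ω => cellResidual c m (X ω, Y ω)) = {ω | X ω = c}.indicator (fun ω => Y ω - m) := by
  ext ω
  simp [cellResidual, Set.indicator_apply]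

variable {Ω : Type*} [MeasurableSpace Ω] {P : Measure Ω} {X Y : Ω → ℝ}

lemma memLp_cellResidual [IsFiniteMeasure P] (hX : Measurable X) (hY : MemLp Y 2 P) (c m : ℝ) :
    MemLp (fun ω => cellResidual c m (X ω, Y ω)) 2 P := by
  rw [cellResidual_comp_eq_indicator]
  exact (hY.sub (memLp_const m)).indicator (measurableSet_eq_fun hX measurable_const)

lemma integral_cellResidual [IsFiniteMeasure P] (hX : Measurable X) (hY : Integrable Y P)
    (c m : ℝ) :
    ∫ ω, cellResidual c m (X ω, Y ω) ∂P
      = (∫ ω, (if X ω = c then Y ω else 0) ∂P) - m * P.real {ω | X ω = c} := by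
  have hA : MeasurableSet {ω | X ω = c} := measurableSet_eq_fun hX measurable_const
  have hYA : (fun ω => if X ω = c then Y ω else 0) = {ω | X ω = c}.indicator Y := by
    ext ω; simp [Set.indicator_apply]
  rw [cellResidual_comp_eq_indicator, hYA, integral_indicator hA, integral_indicator hA,
    integral_sub hY.integrableOn (integrable_const m), setIntegral_const, smul_eq_mul, mul_comm]

end CellResidual

theorem cross_term_mean_and_variance_general
    {Ω : Type*} [MeasureSpace Ω] [IsProbabilityMeasure (ℙ : Measure Ω)]
    (N G : ℕ) (hN : 0 < N)
    (X Y : Fin N → Ω → ℝ)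
    (hXmeas : ∀ i, Measurable (X i)) (hYmeas : ∀ i, Measurable (Y i))
    (hindep : iIndepFun (fun i ω => (X i ω, Y i ω)) ℙ)
    (hident : ∀ i, Measure.map (fun ω => (X i ω, Y i ω)) ℙ
      = Measure.map (fun ω => (X ⟨0, hN⟩ ω, Y ⟨0, hN⟩ ω)) ℙ)
    (x : Fin G → ℝ) (hxinj : Function.Injective x)
    (π : Fin G → ℝ)
    (hπ : ∀ g, π g = (ℙ {ω | X ⟨0, hN⟩ ω = x g}).toReal)
    (hπpos : ∀ g, 0 < π g)
    (hY2 : Integrable (fun ω => (Y ⟨0, hN⟩ ω) ^ 2) ℙ)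
    (μ σsq : Fin G → ℝ)
    (hμ : ∀ g, μ g =
      (∫ ω, (if X ⟨0, hN⟩ ω = x g then Y ⟨0, hN⟩ ω else 0) ∂ℙ) / π g)
    (hσsq : ∀ g, σsq g =
      (∫ ω, (if X ⟨0, hN⟩ ω = x g then (Y ⟨0, hN⟩ ω - μ g) ^ 2 else 0) ∂ℙ) / π g)
    (ε : Fin N → Ω → ℝ)
    (hε : ∀ i ω g, X i ω = x g → ε i ω = Y i ω - μ g)
    (a : Fin G → ℝ)
    (S : Ω → ℝ)
    (hS : ∀ ω, S ω = (1 / (N : ℝ)) * ∑ i, ∑ j,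
      if j < i then
        (∑ g, a g * (if X i ω = x g then (1:ℝ) else 0) * (if X j ω = x g then (1:ℝ) else 0))
          * ε i ω * ε j ω
      else 0) :
    (∫ ω, S ω ∂ℙ) = 0 ∧
    variance S ℙ = (((N : ℝ) - 1) / (2 * N)) * ∑ g, (a g) ^ 2 * (π g) ^ 2 * (σsq g) ^ 2 := by
  set Z : Fin N → Ω → ℝ × ℝ := fun i ω => (X i ω, Y i ω)
  set w : Fin G → ℝ × ℝ → ℝ := fun g => cellResidual (x g) (μ g)
  have hZ (i : Fin N) : Measurable (Z i) := (hXmeas i).prodMk (hYmeas i)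
  have hw (g : Fin G) : Measurable (w g) := measurable_cellResidual _ _
  have hlaw (i : Fin N) : IdentDistrib (Z i) (Z ⟨0, hN⟩) ℙ ℙ :=
    ⟨(hZ i).aemeasurable, (hZ _).aemeasurable, hident i⟩
  have hY0 : MemLp (Y ⟨0, hN⟩) 2 ℙ :=
    (memLp_two_iff_integrable_sq (hYmeas _).aestronglyMeasurable).2 hY2
  have hL2 (i : Fin N) (g : Fin G) : MemLp (fun ω => w g (Z i ω)) 2 ℙ :=
    ((hlaw i).comp (hw g)).memLp_iff.2 (memLp_cellResidual (hXmeas _) hY0 _ _)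
  have hmean (i : Fin N) (g : Fin G) : ∫ ω, w g (Z i ω) ∂ℙ = 0 := by
    refine ((hlaw i).comp (hw g)).integral_eq.trans <|
      (integral_cellResidual (hXmeas _) (hY0.integrable one_le_two) _ _).trans ?_
    rw [measureReal_def, ← hπ, hμ, div_mul_cancel₀ _ (hπpos g).ne', sub_self]
  have hv (i : Fin N) (g : Fin G) : ∫ ω, w g (Z i ω) ^ 2 ∂ℙ = π g * σsq g := by
    refine ((hlaw i).comp ((hw g).pow_const 2)).integral_eq.trans ?_
    simp_rw [Function.comp_apply, w, Z, cellResidual_sq]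
    rw [hσsq, mul_div_cancel₀ _ (hπpos g).ne']
  have horth (g h : Fin G) (p : ℝ × ℝ) (hgh : g ≠ h) : w g p * w h p = 0 :=
    cellResidual_mul_cellResidual_of_ne (hxinj.ne hgh) _ _ _
  have hs : ∀ p ∈ ({p : Fin N × Fin N | p.2 < p.1} : Finset _), p.2 < p.1 := fun p hp =>
    (mem_filter.1 hp).2
  have hSK : S = fun ω => (1 / (N : ℝ)) *
      ∑ p ∈ {p : Fin N × Fin N | p.2 < p.1}, finiteRankKernel a w (Z p.1 ω) (Z p.2 ω) := by
    ext ω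
    rw [hS ω, sum_ite_lt_eq_sum_finiteRankKernel a x μ _ _ _ fun i g => hε i ω g]
  have hSmean : ∫ ω, S ω ∂ℙ = 0 := by
    rw [hSK, integral_const_mul, integral_sum_finiteRankKernel hindep hw hL2 hmean
      fun p hp => (hs p hp).ne', mul_zero]
  refine ⟨hSmean, ?_⟩
  rw [variance_of_integral_eq_zero (by rw [hSK]; unfold finiteRankKernel; fun_prop) hSmean, hSK]
  simp_rw [mul_pow]
  rw [integral_const_mul, integral_sum_finiteRankKernel_sq hZ hindep hw hL2 hmean horth hv hs,
    card_filter_snd_lt_fst]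
  field_simp

/-- Mean and variance of the cross-term C₁₂ in the proof of Theorem 2 of the paper. -/
theorem cross_term_mean_and_variance
    {Ω : Type*} [MeasureSpace Ω] [IsProbabilityMeasure (ℙ : Measure Ω)]
    (N G : ℕ) (hN : 0 < N) (hG : 0 < G)
    (X Y : Fin N → Ω → ℝ)
    (hXmeas : ∀ i, Measurable (X i)) (hYmeas : ∀ i, Measurable (Y i))
    (hindep : iIndepFun (fun i ω => (X i ω, Y i ω)) ℙ)
    (hident : ∀ i, Measure.map (fun ω => (X i ω, Y i ω)) ℙ
      = Measure.map (fun ω => (X ⟨0, hN⟩ ω, Y ⟨0, hN⟩ ω)) ℙ)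
    (x : Fin G → ℝ) (hxinj : Function.Injective x)
    (hsupp : ∀ i ω, X i ω ∈ Set.range x)
    (π : Fin G → ℝ)
    (hπ : ∀ g, π g = (ℙ {ω | X ⟨0, hN⟩ ω = x g}).toReal)
    (hπpos : ∀ g, 0 < π g)
    (hY2 : Integrable (fun ω => (Y ⟨0, hN⟩ ω) ^ 2) ℙ)
    (μ σsq : Fin G → ℝ)
    (hμ : ∀ g, μ g =
      (∫ ω, (if X ⟨0, hN⟩ ω = x g then Y ⟨0, hN⟩ ω else 0) ∂ℙ) / π g)
    (hσsq : ∀ g, σsq g =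
      (∫ ω, (if X ⟨0, hN⟩ ω = x g then (Y ⟨0, hN⟩ ω - μ g) ^ 2 else 0) ∂ℙ) / π g)
    (ε : Fin N → Ω → ℝ)
    (hε : ∀ i ω g, X i ω = x g → ε i ω = Y i ω - μ g)
    (a : Fin G → ℝ)
    (S : Ω → ℝ)
    (hS : ∀ ω, S ω = (1 / (N : ℝ)) * ∑ i, ∑ j,
      if j < i then
        (∑ g, a g * (if X i ω = x g then (1:ℝ) else 0) * (if X j ω = x g then (1:ℝ) else 0))
          * ε i ω * ε j ω
      else 0) :
    (∫ ω, S ω ∂ℙ) = 0 ∧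
    variance S ℙ = (((N : ℝ) - 1) / (2 * N)) * ∑ g, (a g) ^ 2 * (π g) ^ 2 * (σsq g) ^ 2 :=
  cross_term_mean_and_variance_general N G hN X Y hXmeas hYmeas hindep hident x hxinj π hπ hπpos hY2
    μ σsq hμ hσsq ε hε a S hS
end

section
/- Let x_1, …, x_n ∈ [0, ∞), let w_1, …, w_n be real weights with Σ_{i=1}^n w_i = 1 and Σ_{i=1}^n w_i x_i = 0, and let μ: [0, ∞) → ℝ be twice differentiable with second derivative μ'' integrable on [0, max_i x_i]. Then Σ_{i=1}^n w_i μ(x_i) − μ(0) = ∫_0^∞ μ''(s) · w̄(s) ds, where w̄(s) = Σ_{i : x_i ≥ s} w_i (x_i − s) (note w̄(s) = 0 for s > max_i x_i, so the integral is over a bounded interval). -/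
/-!
Subtracting the tangent line of `μ` at `0` does not change the bias, because the weights
reproduce affine functions. Each remaining term `μ (x i) - μ 0 - μ' 0 * x i` is a first-order
Taylor remainder `∫₀^{x i} μ'' s (x i - s) ds`, and exchanging the finite sum with the integral
turns `∑ i, w i (x i - s) 𝟙[s ≤ x i]` into `w̄ s`.
-/

open MeasureTheory Finset

theorem sum_mul_sub_eq_sum_mul_sub_affine {ι : Type*} [Fintype ι] (x w : ι → ℝ) (f : ℝ → ℝ)
    (c : ℝ) (hw1 : ∑ i, w i = 1) (hwx : ∑ i, w i * x i = 0) :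
    ∑ i, w i * f (x i) - f 0 = ∑ i, w i * (f (x i) - f 0 - c * x i) := by
  have hcx : ∑ i, w i * (c * x i) = c * ∑ i, w i * x i := by
    rw [Finset.mul_sum]; exact Finset.sum_congr rfl fun i _ => by ring
  simp only [mul_sub, Finset.sum_sub_distrib, ← Finset.sum_mul, hw1, hcx, hwx]
  ring

theorem MeasureTheory.IntegrableOn.mul_const_sub_Icc {g : ℝ → ℝ} {a b : ℝ}
    (hg : IntegrableOn g (Set.Icc a b)) (c : ℝ) : IntegrableOn (fun s => g s * (c - s)) (Set.Icc a b) :=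
  hg.mul_continuousOn (continuous_const.sub continuous_id).continuousOn isCompact_Icc

theorem integral_Ioc_mul_sub_eq_taylor_remainder {f f' f'' : ℝ → ℝ} {a b : ℝ} (hab : a ≤ b)
    (hf : ∀ s ∈ Set.Icc a b, HasDerivWithinAt f (f' s) (Set.Icc a b) s)
    (hf' : ∀ s ∈ Set.Icc a b, HasDerivWithinAt f' (f'' s) (Set.Icc a b) s)
    (hint : IntegrableOn f'' (Set.Icc a b)) :
    ∫ s in Set.Ioc a b, f'' s * (b - s) = f b - f a - f' a * (b - a) := by
  rw [← intervalIntegral.integral_of_le hab,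
    intervalIntegral.integral_eq_sub_of_hasDeriv_right_of_le (f := fun t => f t + f' t * (b - t))
      hab _ _ ((intervalIntegrable_iff_integrableOn_Icc_of_le hab).2 (hint.mul_const_sub_Icc b))]
  · ring
  · exact (HasDerivWithinAt.continuousOn hf).add
      ((HasDerivWithinAt.continuousOn hf').mul (continuous_const.sub continuous_id).continuousOn)
  · intro s hs
    have hnhds : Set.Icc a b ∈ nhds s := Icc_mem_nhds hs.1 hs.2
    have hderiv : HasDerivAt (fun t => f t + f' t * (b - t))
        (f' s + (f'' s * (b - s) + f' s * -1)) s :=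
      ((hf s (Set.Ioo_subset_Icc_self hs)).hasDerivAt hnhds).add
        (((hf' s (Set.Ioo_subset_Icc_self hs)).hasDerivAt hnhds).mul
          ((hasDerivAt_id s).const_sub b))
    convert hderiv.hasDerivWithinAt using 1
    ring

theorem setIntegral_Ioi_mul_sum_filter_le {ι : Type*} [Fintype ι] (g : ℝ → ℝ) (x w : ι → ℝ)
    (a : ℝ) (hg : ∀ i, IntegrableOn (fun s => g s * (x i - s)) (Set.Ioc a (x i))) :
    ∫ s in Set.Ioi a, g s * ∑ i ∈ univ.filter (fun i => s ≤ x i), w i * (x i - s)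
      = ∑ i, w i * ∫ s in Set.Ioc a (x i), g s * (x i - s) := by
  have hpoint : ∀ s ∈ Set.Ioi a, g s * ∑ i ∈ univ.filter (fun i => s ≤ x i), w i * (x i - s)
      = ∑ i, w i * (Set.Ioc a (x i)).indicator (fun s => g s * (x i - s)) s := by
    intro s hs
    rw [Finset.mul_sum, Finset.sum_filter]
    refine Finset.sum_congr rfl fun i _ => ?_
    by_cases h : s ≤ x i
    · rw [if_pos h, Set.indicator_of_mem (Set.mem_Ioc.2 ⟨hs, h⟩)]; ring
    · rw [if_neg h, Set.indicator_of_notMem fun hc => h hc.2]; ring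
  rw [setIntegral_congr_fun measurableSet_Ioi hpoint, integral_finsetSum]
  · refine Finset.sum_congr rfl fun i _ => ?_
    rw [integral_const_mul, setIntegral_indicator measurableSet_Ioc,
      Set.inter_eq_right.2 Set.Ioc_subset_Ioi_self]
  · exact fun i _ => (((hg i).integrable_indicator measurableSet_Ioc).integrableOn).const_mul (w i)

/-- Integral representation of the bias of a linear estimator with normalized weights
(proof of Proposition 1 of the paper): the bias equals the integral of the second
derivative against the partial weighted moment function w̄. -/
theorem bias_integral_representation
    (n : ℕ) (hn : 0 < n) (x w : Fin n → ℝ)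
    (hx : ∀ i, 0 ≤ x i) (hw1 : ∑ i, w i = 1) (hwx : ∑ i, w i * x i = 0)
    (μ μ' μ'' : ℝ → ℝ)
    (hd1 : ∀ s ∈ Set.Ici (0:ℝ), HasDerivWithinAt μ (μ' s) (Set.Ici 0) s)
    (hd2 : ∀ s ∈ Set.Ici (0:ℝ), HasDerivWithinAt μ' (μ'' s) (Set.Ici 0) s)
    (hint : IntegrableOn μ''
      (Set.Icc 0 (Finset.univ.sup' (Finset.univ_nonempty_iff.mpr ⟨⟨0, hn⟩⟩) x))) :
    ∑ i, w i * μ (x i) - μ 0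
      = ∫ s in Set.Ioi (0:ℝ),
          μ'' s * ∑ i ∈ Finset.univ.filter (fun i => s ≤ x i), w i * (x i - s) := by
  have hint_i : ∀ i, IntegrableOn μ'' (Set.Icc 0 (x i)) := fun i =>
    hint.mono_set (Set.Icc_subset_Icc le_rfl (le_sup' x (mem_univ i)))
  have htaylor : ∀ i, ∫ s in Set.Ioc 0 (x i), μ'' s * (x i - s) = μ (x i) - μ 0 - μ' 0 * x i := by
    intro i
    simpa using integral_Ioc_mul_sub_eq_taylor_remainder (hx i)
      (fun s hs => (hd1 s hs.1).mono Set.Icc_subset_Ici_self)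
      (fun s hs => (hd2 s hs.1).mono Set.Icc_subset_Ici_self) (hint_i i)
  rw [setIntegral_Ioi_mul_sum_filter_le μ'' x w 0 fun i => ?_,
    sum_mul_sub_eq_sum_mul_sub_affine x w μ (μ' 0) hw1 hwx]
  · simp only [htaylor]
  · exact ((hint_i i).mul_const_sub_Icc (x i)).mono_set Set.Ioc_subset_Icc_self
end

section
/- Let x_1, …, x_n ∈ [0, ∞) and let w_1, …, w_n be real weights with Σ_{i=1}^n w_i = 1 and Σ_{i=1}^n w_i x_i = 0. Suppose that w̄(s) = Σ_{i : x_i ≥ s} w_i (x_i − s) ≤ 0 for all s ≥ 0. Then for every C ≥ 0 and every differentiable μ: [0, ∞) → ℝ whose derivative μ' is Lipschitz with constant C (i.e. |μ'(a) − μ'(b)| ≤ C|a − b| for all a, b ≥ 0), one has |Σ_{i=1}^n w_i μ(x_i) − μ(0)| ≤ −(C/2) Σ_{i=1}^n w_i x_i². Moreover, the bound is attained: for μ*(x) = −C x²/2, Σ_{i=1}^n w_i μ*(x_i) − μ*(0) = −(C/2) Σ_{i=1}^n w_i x_i² ≥ 0. -/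
open Finset Set

/-!
The condition `w̄(s) ≤ 0` says `∑ wᵢ φ(xᵢ) ≤ 0` for the hinge functions `φ = (· - s)₊`, `s ≥ 0`.
It extends to every convex `φ ≥ 0` on `[0, ∞)` with `φ(0) = 0`: if `s` is the smallest positive
`xᵢ`, then on the `xᵢ` the function `φ` is `(φ(s)/s)·x` plus a function of the same kind evaluated
at `(x - s)₊`, which takes positive values at fewer indices, and `∑ wᵢ xᵢ = w̄(0) ≤ 0`.
For `μ` with `C`-Lipschitz derivative both `C t²/2 + μ` and `C t²/2 - μ` are convex; applied to
their remainders after the tangent line at `0`, and using `∑ wᵢ = 1`, `∑ wᵢ xᵢ = 0`, this gives the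
two one-sided bounds.
-/

variable {ι : Type*} [Fintype ι]

/-- The paper's `w̄(s)`. -/
def excessSum (w x : ι → ℝ) (s : ℝ) : ℝ := ∑ i, w i * max (x i - s) 0

theorem excessSum_eq_sum_filter (w x : ι → ℝ) (s : ℝ) :
    excessSum w x s = ∑ i ∈ univ.filter (fun i => s ≤ x i), w i * (x i - s) := by
  rw [excessSum, sum_filter]
  refine sum_congr rfl fun i _ => ?_
  split_ifs with h
  · rw [max_eq_left (sub_nonneg.2 h)]
  · rw [max_eq_right (by linarith [not_le.1 h]), mul_zero]

theorem excessSum_zero {w x : ι → ℝ} (hx : ∀ i, 0 ≤ x i) :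
    excessSum w x 0 = ∑ i, w i * x i := by
  simp only [excessSum, sub_zero, max_eq_left (hx _)]

theorem excessSum_max_sub (w x : ι → ℝ) {s t : ℝ} (ht : 0 ≤ t) :
    excessSum w (fun i => max (x i - s) 0) t = excessSum w x (s + t) := by
  refine sum_congr rfl fun i _ => ?_
  congr 1
  dsimp only
  rcases le_total (x i - s) 0 with h | h
  · rw [max_eq_right h, max_eq_right (by linarith), max_eq_right (by linarith)]
  · rw [max_eq_left h, sub_sub]

noncomputable def shiftSubChord (φ : ℝ → ℝ) (s t : ℝ) : ℝ := φ (t + s) - φ s / s * (t + s)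

section shiftSubChord

variable {φ : ℝ → ℝ} {s : ℝ}

theorem shiftSubChord_zero (hs : s ≠ 0) : shiftSubChord φ s 0 = 0 := by
  rw [shiftSubChord, zero_add, div_mul_cancel₀ _ hs, sub_self]

theorem convexOn_shiftSubChord (hφ : ConvexOn ℝ (Ici 0) φ) (hs : 0 ≤ s) :
    ConvexOn ℝ (Ici 0) (shiftSubChord φ s) := by
  refine ⟨convex_Ici 0, fun a ha b hb p q hp hq hpq => ?_⟩
  have hconv := hφ.2 (x := a + s) (y := b + s) (add_nonneg ha hs) (add_nonneg hb hs) hp hq hpq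
  have hcomb : p • (a + s) + q • (b + s) = p • a + q • b + s := by
    simp only [smul_eq_mul]; linear_combination s * hpq
  rw [hcomb] at hconv
  simp only [shiftSubChord, smul_eq_mul] at hconv ⊢
  linear_combination hconv + φ s / s * s * hpq

theorem shiftSubChord_nonneg (hφ : ConvexOn ℝ (Ici 0) φ) (hφ0 : φ 0 = 0) (hs : 0 < s) {t : ℝ}
    (ht : 0 ≤ t) : 0 ≤ shiftSubChord φ s t := by
  rcases ht.eq_or_lt with rfl | ht
  · exact (shiftSubChord_zero hs.ne').ge
  have hslope := hφ.slope_mono_adjacent (x := 0) (y := s) (z := t + s) self_mem_Ici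
    (add_nonneg ht.le hs.le) hs (by linarith)
  rw [hφ0, sub_zero, sub_zero, add_sub_cancel_right, le_div_iff₀ ht] at hslope
  rw [shiftSubChord]
  nlinarith [div_mul_cancel₀ (φ s) hs.ne']

theorem eq_shiftSubChord_max_sub (hφ0 : φ 0 = 0) (hs : 0 < s) {x : ℝ} (hx : x = 0 ∨ s ≤ x) :
    φ x = shiftSubChord φ s (max (x - s) 0) + φ s / s * x := by
  rcases hx with rfl | hx
  · rw [max_eq_right (by linarith), shiftSubChord_zero hs.ne', hφ0]; ring
  · rw [max_eq_left (by linarith), shiftSubChord, sub_add_cancel]; ring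

end shiftSubChord

theorem sum_mul_nonpos_of_convexOn {w x : ι → ℝ} {φ : ℝ → ℝ} (hx : ∀ i, 0 ≤ x i)
    (hw : ∀ s ≥ 0, excessSum w x s ≤ 0) (hφ : ConvexOn ℝ (Ici 0) φ) (hφ0 : φ 0 = 0)
    (hφ_nonneg : ∀ t ≥ 0, 0 ≤ φ t) : ∑ i, w i * φ (x i) ≤ 0 := by
  obtain ⟨S, hS⟩ : ∃ S, univ.filter (fun i => 0 < x i) = S := ⟨_, rfl⟩
  induction S using Finset.strongInduction generalizing x φ with
  | H S ih =>
  rcases S.eq_empty_or_nonempty with rfl | hne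
  · have hx0 : ∀ i, x i = 0 := fun i =>
      le_antisymm (by simpa using filter_eq_empty_iff.1 hS (mem_univ i)) (hx i)
    simp [hx0, hφ0]
  subst hS
  obtain ⟨j, hjS, hj⟩ := exists_min_image _ x hne
  have hs : 0 < x j := (mem_filter.1 hjS).2
  have hx_cases : ∀ i, x i = 0 ∨ x j ≤ x i := fun i =>
    (hx i).eq_or_lt.imp Eq.symm fun h => hj i (mem_filter.2 ⟨mem_univ i, h⟩)
  have hsub : univ.filter (fun i => 0 < max (x i - x j) 0) ⊂ univ.filter (fun i => 0 < x i) := by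
    refine Finset.ssubset_iff_of_subset (fun i hi => ?_) |>.2 ⟨j, hjS, by simp⟩
    have : x j < x i := by simpa using (mem_filter.1 hi).2
    exact mem_filter.2 ⟨mem_univ i, hs.trans this⟩
  have hshift := ih _ hsub (fun i => le_max_right _ _)
    (fun t ht => excessSum_max_sub w x ht ▸ hw _ (by linarith))
    (convexOn_shiftSubChord hφ hs.le) (shiftSubChord_zero hs.ne')
    (fun t ht => shiftSubChord_nonneg hφ hφ0 hs ht) rfl
  have hd : 0 ≤ φ (x j) / x j := div_nonneg (hφ_nonneg _ hs.le) hs.le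
  calc ∑ i, w i * φ (x i)
      = ∑ i, w i * shiftSubChord φ (x j) (max (x i - x j) 0)
          + φ (x j) / x j * excessSum w x 0 := by
        rw [excessSum_zero hx, mul_sum, ← sum_add_distrib]
        refine sum_congr rfl fun i _ => ?_
        rw [eq_shiftSubChord_max_sub hφ0 hs (hx_cases i)]
        ring
    _ ≤ 0 := add_nonpos hshift (mul_nonpos_of_nonneg_of_nonpos hd (hw 0 le_rfl))

theorem sum_mul_le_of_convexOn {w x : ι → ℝ} {ψ : ℝ → ℝ} {a : ℝ} (hx : ∀ i, 0 ≤ x i)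
    (hw1 : ∑ i, w i = 1) (hwx : ∑ i, w i * x i = 0) (hw : ∀ s ≥ 0, excessSum w x s ≤ 0)
    (hψ : ConvexOn ℝ (Ici 0) ψ) (hψ' : HasDerivWithinAt ψ a (Ici 0) 0) :
    ∑ i, w i * ψ (x i) ≤ ψ 0 := by
  have hconv : ConvexOn ℝ (Ici 0) (fun t => ψ t - ψ 0 - a * t) := by
    refine ((hψ.add ((LinearMap.lsmul ℝ ℝ (-a)).convexOn (convex_Ici 0))).add_const
      (-ψ 0)).congr fun t _ => ?_
    simp only [Pi.add_apply, LinearMap.lsmul_apply, smul_eq_mul]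
    ring
  have hnonneg : ∀ t ≥ (0 : ℝ), 0 ≤ ψ t - ψ 0 - a * t := by
    intro t ht
    rcases ht.eq_or_lt with rfl | ht
    · simp
    have hslope := hψ.le_slope_of_hasDerivWithinAt self_mem_Ici ht.le ht hψ'
    rw [slope_def_field, sub_zero, le_div_iff₀ ht] at hslope
    linarith
  have hsum : ∑ i, w i * (ψ (x i) - ψ 0 - a * x i)
      = ∑ i, w i * ψ (x i) - ψ 0 * ∑ i, w i - a * ∑ i, w i * x i := by
    simp only [mul_sum, ← sum_sub_distrib]
    exact sum_congr rfl fun i _ => by ring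
  have hremainder := sum_mul_nonpos_of_convexOn hx hw hconv (by simp) hnonneg
  rw [hsum, hw1, hwx] at hremainder
  linarith

theorem convexOn_mul_sq_add {μ μ' : ℝ → ℝ} {C : ℝ}
    (hd : ∀ s ∈ Ici (0 : ℝ), HasDerivWithinAt μ (μ' s) (Ici 0) s)
    (hlip : ∀ a b : ℝ, 0 ≤ a → 0 ≤ b → |μ' a - μ' b| ≤ C * |a - b|) :
    ConvexOn ℝ (Ici 0) (fun t => C * t ^ 2 / 2 + μ t) := by
  have hderiv : ∀ t ∈ Ici (0 : ℝ),
      HasDerivWithinAt (fun t => C * t ^ 2 / 2 + μ t) (C * t + μ' t) (Ici 0) t := by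
    intro t ht
    exact ((((hasDerivAt_pow 2 t).const_mul C).div_const 2).hasDerivWithinAt.add
      (hd t ht)).congr_deriv (by ring)
  have hderiv_interior : ∀ t ∈ interior (Ici (0 : ℝ)),
      HasDerivAt (fun t => C * t ^ 2 / 2 + μ t) (C * t + μ' t) t := by
    rw [interior_Ici]
    exact fun t ht => (hderiv t (mem_Ici.2 ht.le)).hasDerivAt (Ici_mem_nhds ht)
  refine MonotoneOn.convexOn_of_deriv (convex_Ici 0)
    (fun t ht => (hderiv t ht).continuousWithinAt)
    (fun t ht => (hderiv_interior t ht).differentiableAt.differentiableWithinAt)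
    (fun a ha b hb hab => ?_)
  rw [(hderiv_interior a ha).deriv, (hderiv_interior b hb).deriv]
  rw [interior_Ici] at ha hb
  have hab' := hlip a b ha.le hb.le
  rw [abs_sub_comm a, abs_of_nonneg (sub_nonneg.2 hab)] at hab'
  linarith [le_abs_self (μ' a - μ' b)]

theorem sum_mul_sub_le_of_lipschitz_deriv {w x : ι → ℝ} {μ μ' : ℝ → ℝ} {C : ℝ}
    (hx : ∀ i, 0 ≤ x i) (hw1 : ∑ i, w i = 1) (hwx : ∑ i, w i * x i = 0)
    (hw : ∀ s ≥ 0, excessSum w x s ≤ 0)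
    (hd : ∀ s ∈ Ici (0 : ℝ), HasDerivWithinAt μ (μ' s) (Ici 0) s)
    (hlip : ∀ a b : ℝ, 0 ≤ a → 0 ≤ b → |μ' a - μ' b| ≤ C * |a - b|) :
    ∑ i, w i * μ (x i) - μ 0 ≤ -(C / 2) * ∑ i, w i * x i ^ 2 := by
  have hψ' : HasDerivWithinAt (fun t => C * t ^ 2 / 2 + μ t) (μ' 0) (Ici 0) 0 :=
    ((((hasDerivAt_pow 2 (0 : ℝ)).const_mul C).div_const 2).hasDerivWithinAt.add
      (hd 0 self_mem_Ici)).congr_deriv (by simp)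
  have hsum : ∑ i, w i * (C * x i ^ 2 / 2 + μ (x i))
      = C / 2 * ∑ i, w i * x i ^ 2 + ∑ i, w i * μ (x i) := by
    rw [mul_sum, ← sum_add_distrib]
    exact sum_congr rfl fun i _ => by ring
  have hjensen := sum_mul_le_of_convexOn hx hw1 hwx hw (convexOn_mul_sq_add hd hlip) hψ'
  rw [hsum, zero_pow two_ne_zero, mul_zero, zero_div, zero_add] at hjensen
  linarith

theorem holder_worst_case_bias_bound_general
    (n : ℕ) (x w : Fin n → ℝ)
    (hx : ∀ i, 0 ≤ x i) (hw1 : ∑ i, w i = 1) (hwx : ∑ i, w i * x i = 0)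
    (hwbar : ∀ s ≥ (0:ℝ),
      ∑ i ∈ Finset.univ.filter (fun i => s ≤ x i), w i * (x i - s) ≤ 0)
    (C : ℝ) (μ μ' : ℝ → ℝ)
    (hd : ∀ s ∈ Set.Ici (0:ℝ), HasDerivWithinAt μ (μ' s) (Set.Ici 0) s)
    (hlip : ∀ a b : ℝ, 0 ≤ a → 0 ≤ b → |μ' a - μ' b| ≤ C * |a - b|) :
    |∑ i, w i * μ (x i) - μ 0| ≤ -(C / 2) * ∑ i, w i * (x i) ^ 2 ∧
    (∑ i, w i * (-C * (x i) ^ 2 / 2) - (-C * (0:ℝ) ^ 2 / 2)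
        = -(C / 2) * ∑ i, w i * (x i) ^ 2 ∧
      0 ≤ -(C / 2) * ∑ i, w i * (x i) ^ 2) := by
  have hw : ∀ s ≥ 0, excessSum w x s ≤ 0 := fun s hs =>
    (excessSum_eq_sum_filter w x s).trans_le (hwbar s hs)
  have hupper := sum_mul_sub_le_of_lipschitz_deriv hx hw1 hwx hw hd hlip
  have hlower := sum_mul_sub_le_of_lipschitz_deriv hx hw1 hwx hw (μ := -μ)
    (fun s hs => (hd s hs).neg) fun a b ha hb => by
      rw [neg_sub_neg, abs_sub_comm]; exact hlip a b ha hb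
  simp only [Pi.neg_apply, mul_neg, sum_neg_distrib] at hlower
  have hbound := abs_le.2 ⟨by linarith, hupper⟩
  refine ⟨hbound, ?_, (abs_nonneg _).trans hbound⟩
  rw [mul_sum]
  simp only [zero_pow two_ne_zero, mul_zero, zero_div, sub_zero]
  exact sum_congr rfl fun i _ => by ring

/-- One-sided worst-case bias bound over the second-order Hölder class M_H(C)
underlying the honest confidence interval of Proposition 1 of the paper; the bound is
attained by the quadratic μ*(x) = −Cx²/2 and is nonnegative. -/
theorem holder_worst_case_bias_bound
    (n : ℕ) (x w : Fin n → ℝ)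
    (hx : ∀ i, 0 ≤ x i) (hw1 : ∑ i, w i = 1) (hwx : ∑ i, w i * x i = 0)
    (hwbar : ∀ s ≥ (0:ℝ),
      ∑ i ∈ Finset.univ.filter (fun i => s ≤ x i), w i * (x i - s) ≤ 0)
    (C : ℝ) (hC : 0 ≤ C) (μ μ' : ℝ → ℝ)
    (hd : ∀ s ∈ Set.Ici (0:ℝ), HasDerivWithinAt μ (μ' s) (Set.Ici 0) s)
    (hlip : ∀ a b : ℝ, 0 ≤ a → 0 ≤ b → |μ' a - μ' b| ≤ C * |a - b|) :
    |∑ i, w i * μ (x i) - μ 0| ≤ -(C / 2) * ∑ i, w i * (x i) ^ 2 ∧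
    (∑ i, w i * (-C * (x i) ^ 2 / 2) - (-C * (0:ℝ) ^ 2 / 2)
        = -(C / 2) * ∑ i, w i * (x i) ^ 2 ∧
      0 ≤ -(C / 2) * ∑ i, w i * (x i) ^ 2) :=
  holder_worst_case_bias_bound_general n x w hx hw1 hwx hwbar C μ μ' hd hlip
end

section
/- Let x_1, …, x_n ∈ [0, ∞), let Q̂ = Σ_{i=1}^n (1, x_i)(1, x_i)ᵀ ∈ ℝ^{2×2} be invertible, and let w_i = e₁ᵀ Q̂⁻¹ (1, x_i)ᵀ be the implied intercept weights of the least-squares regression of an outcome on (1, x). Then for every s ≥ 0: Σ_{i : x_i ≥ s} w_i (x_i − s) ≤ 0. -/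
/-!
The intercept weights are `w i = (∑ x² - (∑ x) * x i) / det Q̂`, and `det Q̂ ≥ 0` because `Q̂` is a
Gram matrix (when it vanishes, Lean's `Q̂⁻¹ = 0` makes every weight `0`). With `T = {i | s ≤ x i}`,
`U = ∑_T (x i - s)` and `V = ∑_T (x i - s)²`, the numerator of the partial moment is
`(∑ x² - s ∑ x) U - (∑ x) V`, and
`(∑ x² - s ∑ x) U ≤ (V + s U) U ≤ V U + s |T| V = (U + s |T|) V ≤ (∑ x) V`:
the first step drops the nonpositive terms `x i (x i - s)` with `x i < s`, the second is
Cauchy–Schwarz, the last uses `x ≥ 0` off `T`.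
-/

open Matrix Finset

theorem Matrix.dotProduct_inv_mulVec_fin_two {K : Type*} [Field K]
    (A : Matrix (Fin 2) (Fin 2) K) (t : K) :
    ![1, 0] ⬝ᵥ (A⁻¹ *ᵥ ![1, t]) = (A 1 1 - A 0 1 * t) / A.det := by
  rw [inv_def, adjugate_fin_two, Ring.inverse_eq_inv']
  simp [mulVec, dotProduct, Fin.sum_univ_two, div_eq_inv_mul, sub_eq_add_neg, mul_add, mul_assoc]

theorem Matrix.posSemidef_sum_vecMulVec_self {ι n R : Type*} [Fintype ι] [Fintype n]
    [CommRing R] [StarRing R] [PartialOrder R] [StarOrderedRing R] [TrivialStar R] (v : ι → n → R) :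
    (∑ i, vecMulVec (v i) (v i)).PosSemidef :=
  posSemidef_sum _ fun i _ => by simpa using posSemidef_vecMulVec_self_star (v i)

theorem sum_vecMulVec_one_fin_two {ι R : Type*} [Fintype ι] [CommSemiring R] (x : ι → R) :
    ∑ i, vecMulVec ![1, x i] ![1, x i] =
      !![(Fintype.card ι : R), ∑ i, x i; ∑ i, x i, ∑ i, x i ^ 2] := by
  ext j k
  fin_cases j <;> fin_cases k <;> simp [vecMulVec, Matrix.sum_apply, sq]

section PartialMoment

variable {ι : Type*} [Fintype ι] (x : ι → ℝ) (s : ℝ)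

theorem sum_mul_sub_le_sum_filter_le (hx : ∀ i, 0 ≤ x i) :
    ∑ i, x i * (x i - s) ≤ ∑ i ∈ univ.filter (fun i => s ≤ x i), x i * (x i - s) := by
  rw [← sum_filter_add_sum_filter_not univ (fun i => s ≤ x i)]
  refine add_le_of_nonpos_right (sum_nonpos fun i hi => ?_)
  exact mul_nonpos_of_nonneg_of_nonpos (hx i) (sub_nonpos.2 (not_le.1 (mem_filter.1 hi).2).le)

theorem sum_filter_le_mul_sub_nonpos (hx : ∀ i, 0 ≤ x i) (hs : 0 ≤ s) :
    ∑ i ∈ univ.filter (fun i => s ≤ x i), (∑ j, x j ^ 2 - (∑ j, x j) * x i) * (x i - s) ≤ 0 := by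
  set T := univ.filter (fun i => s ≤ x i)
  set U := ∑ i ∈ T, (x i - s)
  set V := ∑ i ∈ T, (x i - s) ^ 2
  have hU : 0 ≤ U := sum_nonneg fun i hi => sub_nonneg.2 (mem_filter.1 hi).2
  have hmoment : ∑ j, x j ^ 2 - s * ∑ j, x j ≤ V + s * U :=
    calc ∑ j, x j ^ 2 - s * ∑ j, x j = ∑ i, x i * (x i - s) := by
          rw [mul_sum, ← sum_sub_distrib]; congr! 1; ring
      _ ≤ ∑ i ∈ T, x i * (x i - s) := sum_mul_sub_le_sum_filter_le x s hx
      _ = V + s * U := by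
          rw [mul_sum, ← sum_add_distrib]; congr! 1; ring
  have hmass : U + s * #T ≤ ∑ j, x j :=
    calc U + s * #T = ∑ i ∈ T, x i := by
          simp only [U, sum_sub_distrib, sum_const, nsmul_eq_mul]; ring
      _ ≤ ∑ j, x j := sum_le_sum_of_subset_of_nonneg (filter_subset _ _) fun i _ _ => hx i
  have hCS : U ^ 2 ≤ #T * V := sq_sum_le_card_mul_sum_sq
  have hsplit : ∑ i ∈ T, (∑ j, x j ^ 2 - (∑ j, x j) * x i) * (x i - s) =
      (∑ j, x j ^ 2 - s * ∑ j, x j) * U - (∑ j, x j) * V := by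
    rw [mul_sum T, mul_sum T, ← sum_sub_distrib]; congr! 1; ring
  rw [hsplit, sub_nonpos]
  calc (∑ j, x j ^ 2 - s * ∑ j, x j) * U ≤ (V + s * U) * U := by gcongr
    _ = V * U + s * U ^ 2 := by ring
    _ ≤ V * U + s * (#T * V) := by gcongr
    _ = (U + s * #T) * V := by ring
    _ ≤ (∑ j, x j) * V := by gcongr

end PartialMoment

theorem local_linear_weights_partial_moment_nonpos_general
    (n : ℕ) (x : Fin n → ℝ) (hx : ∀ i, 0 ≤ x i)
    (Qhat : Matrix (Fin 2) (Fin 2) ℝ)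
    (hQhat : Qhat = ∑ i, vecMulVec ![1, x i] ![1, x i])
    (w : Fin n → ℝ)
    (hw : ∀ i, w i = ![1, 0] ⬝ᵥ (Qhat⁻¹ *ᵥ ![1, x i])) :
    ∀ s ≥ (0:ℝ), ∑ i ∈ Finset.univ.filter (fun i => s ≤ x i), w i * (x i - s) ≤ 0 := by
  intro s hs
  have hdet : 0 ≤ Qhat.det := hQhat ▸ (posSemidef_sum_vecMulVec_self _).det_nonneg
  have hQ := hQhat.trans (sum_vecMulVec_one_fin_two x)
  have hweight : ∀ i, w i = (∑ j, x j ^ 2 - (∑ j, x j) * x i) / Qhat.det := fun i => by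
    rw [hw, dotProduct_inv_mulVec_fin_two, hQ]; simp
  simp_rw [hweight, div_mul_eq_mul_div, ← sum_div]
  exact div_nonpos_of_nonpos_of_nonneg (sum_filter_le_mul_sub_nonpos x s hx hs) hdet

/-- Sign property of the partial weighted moments of the intercept weights of a
least-squares regression on (1, x) with nonnegative design points (key step in the
proof of Proposition 1 of the paper). -/
theorem local_linear_weights_partial_moment_nonpos
    (n : ℕ) (x : Fin n → ℝ) (hx : ∀ i, 0 ≤ x i)
    (Qhat : Matrix (Fin 2) (Fin 2) ℝ)
    (hQhat : Qhat = ∑ i, vecMulVec ![1, x i] ![1, x i])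
    (hQinv : IsUnit Qhat.det)
    (w : Fin n → ℝ)
    (hw : ∀ i, w i = ![1, 0] ⬝ᵥ (Qhat⁻¹ *ᵥ ![1, x i])) :
    ∀ s ≥ (0:ℝ), ∑ i ∈ Finset.univ.filter (fun i => s ≤ x i), w i * (x i - s) ≤ 0 :=
  local_linear_weights_partial_moment_nonpos_general n x hx Qhat hQhat w hw
end
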